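/- arXiv:2212.01024 — 4 statements merged into one kernel-verified Lean document; each statement's English description precedes it below -/
import Mathlib

section
/- Suppose L has no strong bispecial word. If a bi-infinite sequence x ∈ X_L is right recurrent, then x is also left recurrent, and the language of factors of x is uniformly recurrent. -/
open List Set

variable {A : Type*}

/-- A (factorial, extendable) language over an alphabet `A`. -/
def IsLanguage (L : Set (List A)) : Prop :=
  (∀ w ∈ L, ∀ v : List A, v <:+: w → v ∈ L) ∧
  (∀ w ∈ L, ∃ a : A, a :: w ∈ L) ∧
  (∀ w ∈ L, ∃ a : A, w ++ [a] ∈ L)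

/-- Arrival set `A(w)`. -/
def arrSet (L : Set (List A)) (w : List A) : Set A := {a | a :: w ∈ L}

/-- Departure set `D(w)`. -/
def depSet (L : Set (List A)) (w : List A) : Set A := {a | w ++ [a] ∈ L}

def Bispecial (L : Set (List A)) (w : List A) : Prop :=
  1 < (arrSet L w).ncard ∧ 1 < (depSet L w).ncard

/-- `m(w) = #{awb ∈ L}`. -/
noncomputable def extCount (L : Set (List A)) (w : List A) : ℕ :=
  {p : A × A | p.1 :: (w ++ [p.2]) ∈ L}.ncard

def StrongBispecial (L : Set (List A)) (w : List A) : Prop :=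
  Bispecial L w ∧ (arrSet L w).ncard + (depSet L w).ncard - 1 < extCount L w

def WeakBispecial (L : Set (List A)) (w : List A) : Prop :=
  Bispecial L w ∧ extCount L w < (arrSet L w).ncard + (depSet L w).ncard - 1

def LocallyStrongBispecial (L : Set (List A)) (w : List A) : Prop :=
  Bispecial L w ∧ ∃ A' D' : Set A, A'.Nonempty ∧ D'.Nonempty ∧
    A' ⊆ arrSet L w ∧ D' ⊆ depSet L w ∧
    A'.ncard + D'.ncard - 1 <
      {p : A × A | p.1 ∈ A' ∧ p.2 ∈ D' ∧ p.1 :: (w ++ [p.2]) ∈ L}.ncard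

/-- The order condition at a single bispecial word, for orders `rA`, `rD`. -/
def OrderConditionAt (L : Set (List A)) (w : List A) (rA rD : A → A → Prop) : Prop :=
  ∀ a b c d : A, a ≠ b → c ≠ d →
    a :: (w ++ [c]) ∈ L → b :: (w ++ [d]) ∈ L → (rA a b ↔ rD c d)

/-- The local order condition. -/
def LocalOrderCondition (L : Set (List A)) : Prop :=
  ∀ w : List A, Bispecial L w → ∃ rA rD : A → A → Prop,
    IsStrictTotalOrder A rA ∧ IsStrictTotalOrder A rD ∧ OrderConditionAt L w rA rD

/-- `a` and `a'` are consecutive in the strict order `r`. -/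
def ConsecutiveIn (r : A → A → Prop) (a a' : A) : Prop :=
  r a a' ∧ ∀ c : A, ¬ (r a c ∧ r c a')

/-- A connection for the bispecial word `w`, with respect to orders `rA`, `rD`. -/
def ConnectionWith (L : Set (List A)) (w : List A) (rA rD : A → A → Prop) : Prop :=
  ∃ a a' b b' : A, ConsecutiveIn rA a a' ∧ ConsecutiveIn rD b b' ∧
    a :: (w ++ [b]) ∈ L ∧ a' :: (w ++ [b']) ∈ L ∧
    a :: (w ++ [b']) ∉ L ∧ a' :: (w ++ [b]) ∉ L

/-- `w` has a connection (for some orders realizing the order condition at `w`). -/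
def HasConnection (L : Set (List A)) (w : List A) : Prop :=
  ∃ rA rD : A → A → Prop, IsStrictTotalOrder A rA ∧ IsStrictTotalOrder A rD ∧
    OrderConditionAt L w rA rD ∧ ConnectionWith L w rA rD

/-- Complexity function `p(n)`. -/
noncomputable def complexityFn (L : Set (List A)) (n : ℕ) : ℕ :=
  {w ∈ L | w.length = n}.ncard

def UniformlyRecurrent (L : Set (List A)) : Prop :=
  ∀ v ∈ L, ∃ n : ℕ, ∀ u ∈ L, u.length = n → v <:+: u

def LangRecurrent (L : Set (List A)) : Prop :=
  ∀ v ∈ L, ∃ u : List A, u ≠ [] ∧ v ++ u ∈ L ∧ v <:+ v ++ u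

def LangAperiodic (L : Set (List A)) : Prop :=
  ∀ w ∈ L, w ≠ [] → ∃ n : ℕ, (List.replicate n w).flatten ∉ L

def LeftSpecial (L : Set (List A)) (w : List A) : Prop := 1 < (arrSet L w).ncard

def RightSpecial (L : Set (List A)) (w : List A) : Prop := 1 < (depSet L w).ncard

/-- The two-sided subshift associated to `L`. -/
def XL (L : Set (List A)) : Set (ℤ → A) :=
  {x | ∀ (m : ℤ) (n : ℕ), (List.ofFn fun i : Fin n => x (m + (i : ℕ))) ∈ L}

def occursAtZ (x : ℤ → A) (m : ℤ) (w : List A) : Prop :=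
  (List.ofFn fun i : Fin w.length => x (m + (i : ℕ))) = w

def FactorsZ (x : ℤ → A) : Set (List A) := {w | ∃ m : ℤ, occursAtZ x m w}

def RightRec (x : ℤ → A) : Prop :=
  ∀ w ∈ FactorsZ x, ∀ N : ℤ, ∃ m : ℤ, N ≤ m ∧ occursAtZ x m w

def LeftRec (x : ℤ → A) : Prop :=
  ∀ w ∈ FactorsZ x, ∀ N : ℤ, ∃ m : ℤ, m ≤ N ∧ occursAtZ x m w

def RecurrentZ (x : ℤ → A) : Prop := RightRec x ∧ LeftRec x

/-- The `F`-flipped order condition, with orders `rA` (arrival) and `rD` (departure):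
the departure order is reversed when the number of `F`-letters of `w` is odd. -/
def FlippedOC [DecidableEq A] (L : Set (List A)) (F : Finset A)
    (rA rD : A → A → Prop) : Prop :=
  ∀ w : List A, Bispecial L w → ∀ a b c d : A, a ≠ b → c ≠ d →
    a :: (w ++ [c]) ∈ L → b :: (w ++ [d]) ∈ L →
    (rA a b ↔ if Even (w.countP fun e => decide (e ∈ F)) then rD c d else rD d c)

/-- A generalized `F`-flipped interval exchange transformation. -/
structure GIET (A : Type*) (F : Finset A) where
  l : A → ℝ
  r : A → ℝ
  T : ℝ → ℝ
  lt : ∀ e, l e < r e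
  sub : ∀ e, Set.Ioo (l e) (r e) ⊆ Set.Ioo (0 : ℝ) 1
  disj : ∀ e f, e ≠ f → Disjoint (Set.Ioo (l e) (r e)) (Set.Ioo (l f) (r f))
  cover : Set.Icc (0 : ℝ) 1 = ⋃ e, Set.Icc (l e) (r e)
  cont : ∀ e, ContinuousOn T (Set.Ioo (l e) (r e))
  inc : ∀ e ∉ F, StrictMonoOn T (Set.Ioo (l e) (r e))
  dec : ∀ e ∈ F, StrictAntiOn T (Set.Ioo (l e) (r e))
  l' : A → ℝ
  r' : A → ℝ
  lt' : ∀ e, l' e < r' e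
  img : ∀ e, T '' Set.Ioo (l e) (r e) = Set.Ioo (l' e) (r' e)
  disj' : ∀ e f, e ≠ f → Disjoint (Set.Ioo (l' e) (r' e)) (Set.Ioo (l' f) (r' f))
  cover' : Set.Icc (0 : ℝ) 1 = ⋃ e, Set.Icc (l' e) (r' e)

variable {F : Finset A}

/-- A bi-infinite orbit of `G`, with symbolic itinerary `u`. -/
def GIET.IsOrbit (G : GIET A F) (u : ℤ → A) (p : ℤ → ℝ) : Prop :=
  (∀ n : ℤ, G.T (p n) = p (n + 1)) ∧
  ∀ n : ℤ, p n ∈ Set.Ioo (G.l (u n)) (G.r (u n))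

/-- The natural coding `L(T)`: the language generated by all trajectories. -/
def GIET.lang (G : GIET A F) : Set (List A) :=
  {w | ∃ (u : ℤ → A) (p : ℤ → ℝ), G.IsOrbit u p ∧
    ∃ m : ℤ, (List.ofFn fun i : Fin w.length => u (m + (i : ℕ))) = w}

/-!
Without strong bispecial words, `s(n) = p(n + 1) - p(n)` is nonincreasing, hence eventually
constant; from then on every right special word has a right special left extension, so the number
of right special words of length `n` is nondecreasing and bounded, hence eventually constant, and
beyond some length `N` a right special word is determined by its suffix of length `N`.

If a factor `v` of `x` left arbitrarily long gaps, right recurrence would give arbitrarily long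
factors in which `v` occurs only as a prefix, and Kőnig's lemma an infinite word `ω` of this kind.
Infinitely many prefixes of `ω` are right special: otherwise `ω` continues like `x` after one of
its occurrences, and right recurrence puts another `v` into `ω`. Two such prefixes share their
suffix of length `N`, so the shorter one, and with it `v`, reappears later in `ω`.
Left recurrence is a consequence of uniform recurrence.
-/

namespace Stream'

theorem take_drop_eq_of_prefix_drop_take {s : Stream' A} {v : List A} {i k : ℕ}
    (h : v <+: (s.take k).drop i) : (s.drop i).take v.length = v :=
  List.ext_getElem (by simp) fun j _ hj => by
    rw [h.getElem hj]
    simp [Stream'.get_drop]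

theorem infix_take_of_take_drop_eq {s : Stream' A} {v : List A} {i k : ℕ}
    (h : (s.drop i).take v.length = v) (hk : i + v.length ≤ k) : v <:+: s.take k := by
  rw [← h, take_drop]
  exact (List.drop_suffix _ _).isInfix.trans (take_prefix_take_left _ _ s hk).isInfix

theorem exists_take_drop_eq_of_infix_take {s : Stream' A} {v : List A} {k : ℕ}
    (h : v <:+: s.take k) : ∃ i, i + v.length ≤ k ∧ (s.drop i).take v.length = v := by
  obtain ⟨u, t, hut⟩ := h
  have hlen := congrArg List.length hut
  simp only [List.length_append, length_take] at hlen
  refine ⟨u.length, by omega, take_drop_eq_of_prefix_drop_take (k := k) ?_⟩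
  rw [← hut, List.append_assoc, List.drop_left]
  exact List.prefix_append _ _

theorem exists_forall_take_of_forall_append {P : List A → Prop} (h₀ : P [])
    (hstep : ∀ w, P w → ∃ a, P (w ++ [a])) : ∃ ω : Stream' A, ∀ n, P (ω.take n) := by
  choose next hnext using hstep
  let prefixes : ℕ → {w // P w} :=
    fun n => n.rec ⟨[], h₀⟩ fun _ w => ⟨w.1 ++ [next w.1 w.2], hnext w.1 w.2⟩
  let ω : Stream' A := fun n => next (prefixes n).1 (prefixes n).2
  refine ⟨ω, fun n => ?_⟩
  suffices h : (prefixes n).1 = ω.take n from h ▸ (prefixes n).2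
  induction n with
  | zero => rfl
  | succ n ih => rw [take_succ', ← ih]; rfl

/-- Kőnig's lemma for words over a finite alphabet. -/
theorem exists_forall_take_prefix [Finite A] {S : Set (List A)}
    (hS : ∀ n, ∃ α ∈ S, n ≤ α.length) :
    ∃ ω : Stream' A, ∀ n, ∃ α ∈ S, ω.take n <+: α := by
  obtain ⟨ω, hω⟩ := exists_forall_take_of_forall_append
    (P := fun w => ∀ n, ∃ α ∈ S, w <+: α ∧ n ≤ α.length)
    (fun n => (hS n).imp fun α ⟨hα, hn⟩ => ⟨hα, List.nil_prefix, hn⟩) fun w hw => by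
      by_contra! hbound
      choose bound hbound using hbound
      obtain ⟨M, hM⟩ := (Set.finite_range bound).bddAbove
      obtain ⟨α, hα, ⟨t, rfl⟩, hlen⟩ := hw (M + w.length + 1)
      obtain ⟨a, t, rfl⟩ : ∃ (a : A) (t' : List A), t = a :: t' :=
        List.exists_cons_of_ne_nil (by rintro rfl; simp at hlen)
      have hshort := hbound a _ hα ⟨t, by simp⟩
      have hM' := hM (Set.mem_range_self a)
      simp only [List.length_append, List.length_cons] at hshort hlen
      omega
  exact ⟨ω, fun n => (hω n 0).imp fun α ⟨hα, hpre, _⟩ => ⟨hα, hpre⟩⟩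

end Stream'

def streamFrom (x : ℤ → A) (m : ℤ) : Stream' A := fun i => x (m + i)

section Factors

variable {x : ℤ → A} {L : Set (List A)} {v w : List A}

theorem occursAtZ_iff_take_streamFrom {m : ℤ} :
    occursAtZ x m w ↔ (streamFrom x m).take w.length = w := by
  rw [occursAtZ, iff_iff_eq]
  congr 1
  exact List.ext_getElem (by simp) fun i _ _ => by simp [streamFrom, Stream'.get]

theorem drop_streamFrom (m : ℤ) (i : ℕ) : (streamFrom x m).drop i = streamFrom x (m + i) := by
  funext j
  simp only [streamFrom, Stream'.drop, Stream'.get]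
  push_cast
  ring_nf

theorem take_streamFrom_mem_factorsZ (m : ℤ) (k : ℕ) : (streamFrom x m).take k ∈ FactorsZ x :=
  ⟨m, occursAtZ_iff_take_streamFrom.2 (by rw [Stream'.length_take])⟩

theorem exists_occursAtZ_of_infix_take_streamFrom {m : ℤ} {k : ℕ}
    (h : v <:+: (streamFrom x m).take k) :
    ∃ i : ℕ, i + v.length ≤ k ∧ occursAtZ x (m + i) v := by
  obtain ⟨i, hik, hi⟩ := Stream'.exists_take_drop_eq_of_infix_take h
  exact ⟨i, hik, occursAtZ_iff_take_streamFrom.2 (by rwa [← drop_streamFrom])⟩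

theorem infix_mem_factorsZ (hw : w ∈ FactorsZ x) (h : v <:+: w) : v ∈ FactorsZ x := by
  obtain ⟨m, hm⟩ := hw
  rw [occursAtZ_iff_take_streamFrom] at hm
  obtain ⟨i, -, hi⟩ := exists_occursAtZ_of_infix_take_streamFrom (hm ▸ h)
  exact ⟨_, hi⟩

theorem factorsZ_subset_of_mem_XL (hx : x ∈ XL L) : FactorsZ x ⊆ L := by
  rintro w ⟨m, hm⟩
  exact hm ▸ hx m w.length

theorem leftRec_of_uniformlyRecurrent (hx : UniformlyRecurrent (FactorsZ x)) : LeftRec x := by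
  intro w hw N
  obtain ⟨n, hn⟩ := hx w hw
  obtain ⟨i, hi, hocc⟩ := exists_occursAtZ_of_infix_take_streamFrom
    (hn _ (take_streamFrom_mem_factorsZ (N - n) n) (Stream'.length_take _ _))
  exact ⟨N - n + i, by omega, hocc⟩

end Factors

def OccursOnlyAsPrefix (v α : List A) : Prop :=
  v <+: α ∧ ∀ i, 0 < i → ¬ v <+: α.drop i

theorem exists_occursOnlyAsPrefix_of_forall_not_infix {x : ℤ → A} {v : List A}
    (hrr : RightRec x) (hv : v ∈ FactorsZ x)
    (hgap : ∀ n, ∃ u ∈ FactorsZ x, u.length = n ∧ ¬ v <:+: u) (n : ℕ) :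
    ∃ α ∈ FactorsZ x, OccursOnlyAsPrefix v α ∧ n ≤ α.length := by
  have hv₀ : v ≠ [] := by
    rintro rfl
    obtain ⟨u, -, -, hu⟩ := hgap 0
    exact hu List.nil_infix
  obtain ⟨u, hu, hulen, hvu⟩ := hgap (n + v.length)
  obtain ⟨p₀, hp₀⟩ := hv
  obtain ⟨q, hq, hqu⟩ := hrr u hu p₀
  -- the block starts at the last occurrence `p` of `v` before `u` ends, and reaches past `u`
  obtain ⟨p, ⟨hp₀p, hpq, hp⟩, hmax⟩ := Int.exists_greatest_of_bdd
    (P := fun z => p₀ ≤ z ∧ z ≤ q + n ∧ occursAtZ x z v)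
    ⟨q + n, fun z hz => hz.2.1⟩ ⟨p₀, le_rfl, by omega, hp₀⟩
  rw [occursAtZ_iff_take_streamFrom] at hp hqu
  have hpq' : p < q := by
    by_contra! hqp
    obtain ⟨j, rfl⟩ : ∃ j : ℕ, p = q + j := ⟨(p - q).toNat, by omega⟩
    apply hvu
    rw [← hqu, hulen]
    exact Stream'.infix_take_of_take_drop_eq (by rwa [drop_streamFrom]) (by omega)
  obtain ⟨K, hK⟩ : ∃ K : ℕ, (K : ℤ) = q - p + n + v.length :=
    ⟨(q - p + n + v.length).toNat, by omega⟩
  refine ⟨(streamFrom x p).take K, take_streamFrom_mem_factorsZ p K,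
    ⟨hp ▸ Stream'.take_prefix_take_left _ _ _ (by omega), fun i hi hvi => ?_⟩,
    by rw [Stream'.length_take]; omega⟩
  have hlen := hvi.length_le
  rw [List.length_drop, Stream'.length_take] at hlen
  have hocc := Stream'.take_drop_eq_of_prefix_drop_take hvi
  rw [drop_streamFrom, ← occursAtZ_iff_take_streamFrom] at hocc
  have := hmax (p + i) ⟨by omega, by have := List.length_pos_iff.2 hv₀; omega, hocc⟩
  omega

theorem Nat.exists_forall_ge_eq_of_antitone {f : ℕ → ℕ} (hf : Antitone f) :
    ∃ N, ∀ n ≥ N, f n = f N := by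
  obtain ⟨N, hN⟩ := wellFoundedGT_iff_monotone_chain_condition.1
    (inferInstance : WellFoundedGT ℕᵒᵈ) ⟨fun n => OrderDual.toDual (f n), hf⟩
  exact ⟨N, fun n hn => (hN n hn).symm⟩

namespace IsLanguage

variable {L : Set (List A)} (hL : IsLanguage L) {u w : List A}
include hL

theorem mem_of_infix (hw : w ∈ L) (h : u <:+: w) : u ∈ L := hL.1 w hw u h

theorem depSet_subset_of_suffix (h : u <:+ w) : depSet L w ⊆ depSet L u := by
  obtain ⟨s, rfl⟩ := h
  exact fun b hb => hL.mem_of_infix hb ⟨s, [], by simp⟩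

end IsLanguage

theorem eq_of_not_rightSpecial [Finite A] {L : Set (List A)} {w : List A}
    (h : ¬ RightSpecial L w) {b c : A} (hb : w ++ [b] ∈ L) (hc : w ++ [c] ∈ L) : b = c := by
  by_contra hbc
  exact h ((Set.one_lt_ncard_iff (Set.toFinite _)).2 ⟨b, c, hb, hc, hbc⟩)

section Counting

open scoped Classical

variable [Fintype A] {L : Set (List A)} {w : List A}

theorem one_le_ncard_depSet (hL : IsLanguage L) (hw : w ∈ L) : 1 ≤ (depSet L w).ncard :=
  (Set.ncard_pos (Set.toFinite _)).2 (hL.2.2 w hw)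

theorem extCount_le_mul (hL : IsLanguage L) (w : List A) :
    extCount L w ≤ (arrSet L w).ncard * (depSet L w).ncard := by
  rw [extCount, ← Set.ncard_prod]
  refine Set.ncard_le_ncard (fun p hp => ⟨?_, ?_⟩) (Set.toFinite _)
  · exact hL.mem_of_infix hp (List.prefix_append (p.1 :: w) [p.2]).isInfix
  · exact hL.mem_of_infix hp (List.suffix_cons p.1 _).isInfix

theorem extCount_eq_sum (hL : IsLanguage L) (w : List A) :
    extCount L w = ∑ a ∈ (arrSet L w).toFinset, (depSet L (a :: w)).ncard := by
  rw [extCount, Set.ncard_eq_toFinset_card',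
    Finset.card_eq_sum_card_fiberwise (f := Prod.fst) fun p hp => ?_]
  · refine Finset.sum_congr rfl fun a _ => ?_
    rw [Set.ncard_eq_toFinset_card']
    refine Finset.card_nbij' Prod.snd (Prod.mk a) ?_ ?_ ?_ ?_ <;>
      intro p <;> simp only [Finset.mem_coe, Finset.mem_filter, Set.mem_toFinset] <;>
      aesop (add norm depSet)
  · rw [Finset.mem_coe, Set.mem_toFinset] at hp ⊢
    exact hL.mem_of_infix hp (List.prefix_append (p.1 :: w) [p.2]).isInfix

theorem extCount_add_one_le (hL : IsLanguage L) (hw : w ∈ L) (hs : ¬ StrongBispecial L w) :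
    extCount L w + 1 ≤ (arrSet L w).ncard + (depSet L w).ncard := by
  have ha : 0 < (arrSet L w).ncard := (Set.ncard_pos (Set.toFinite _)).2 (hL.2.1 w hw)
  have hd := one_le_ncard_depSet hL hw
  have hm := extCount_le_mul hL w
  by_cases ha₁ : (arrSet L w).ncard = 1
  · rw [ha₁, one_mul] at hm
    omega
  by_cases hd₁ : (depSet L w).ncard = 1
  · rw [hd₁, mul_one] at hm
    omega
  have hbis : Bispecial L w := ⟨by omega, by omega⟩
  have := mt (And.intro hbis) hs
  omega

noncomputable def wordsOfLength (L : Set (List A)) (n : ℕ) : Finset (List A) :=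
  ((List.finite_length_eq A n).inter_of_right L).toFinset

theorem mem_wordsOfLength {n : ℕ} : w ∈ wordsOfLength L n ↔ w ∈ L ∧ w.length = n := by
  simp [wordsOfLength]

theorem sum_wordsOfLength_succ (hL : IsLanguage L) (f : List A → ℕ) (n : ℕ) :
    ∑ w ∈ wordsOfLength L (n + 1), f w =
      ∑ w ∈ wordsOfLength L n, ∑ a ∈ (arrSet L w).toFinset, f (a :: w) := by
  rw [← Finset.sum_fiberwise_of_maps_to (g := List.tail) (t := wordsOfLength L n) fun u hu => ?_]
  · refine Finset.sum_congr rfl fun w hw => ?_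
    rw [← Finset.sum_image fun a _ b _ h => (List.cons_eq_cons.1 h).1]
    congr 1
    ext u
    obtain ⟨hwL, rfl⟩ := mem_wordsOfLength.1 hw
    rcases u with _ | ⟨a, u⟩ <;>
      simp only [Finset.mem_filter, Finset.mem_image, mem_wordsOfLength, Set.mem_toFinset] <;>
      simp +contextual [arrSet, eq_comm]
  · obtain ⟨huL, hu⟩ := mem_wordsOfLength.1 hu
    exact mem_wordsOfLength.2 ⟨hL.mem_of_infix huL (List.tail_suffix u).isInfix, by simp [hu]⟩

/-- `s(n) = p(n + 1) - p(n)`, counted as the sum of `d(w) - 1` over the words of length `n`. -/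
noncomputable def complexityDiff (L : Set (List A)) (n : ℕ) : ℕ :=
  ∑ w ∈ wordsOfLength L n, ((depSet L w).ncard - 1)

theorem complexityDiff_succ (hL : IsLanguage L) (n : ℕ) :
    complexityDiff L (n + 1) =
      ∑ w ∈ wordsOfLength L n, (extCount L w - (arrSet L w).ncard) := by
  rw [complexityDiff, sum_wordsOfLength_succ hL]
  refine Finset.sum_congr rfl fun w _ => ?_
  rw [Finset.sum_tsub_distrib _ fun a ha => ?_, extCount_eq_sum hL, Set.ncard_eq_toFinset_card',
    Finset.card_eq_sum_ones]
  exact one_le_ncard_depSet hL (Set.mem_toFinset.1 ha : a ∈ arrSet L w)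

theorem complexityDiff_antitone (hL : IsLanguage L) (hns : ∀ w, ¬ StrongBispecial L w) :
    Antitone (complexityDiff L) := by
  refine antitone_nat_of_succ_le fun n => ?_
  rw [complexityDiff_succ hL]
  refine Finset.sum_le_sum fun w hw => ?_
  have := extCount_add_one_le hL (mem_wordsOfLength.1 hw).1 (hns w)
  omega

end Counting

section RightSpecials

open scoped Classical

variable [Fintype A] {L : Set (List A)} {w : List A} {n : ℕ}

noncomputable def rightSpecials (L : Set (List A)) (n : ℕ) : Finset (List A) :=
  (wordsOfLength L n).filter (RightSpecial L)

theorem mem_rightSpecials :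
    w ∈ rightSpecials L n ↔ w ∈ L ∧ w.length = n ∧ RightSpecial L w := by
  simp [rightSpecials, mem_wordsOfLength, and_assoc]

theorem drop_mem_rightSpecials (hL : IsLanguage L) {k : ℕ} (hw : w ∈ rightSpecials L (n + k)) :
    w.drop k ∈ rightSpecials L n := by
  obtain ⟨hwL, hlen, hrs⟩ := mem_rightSpecials.1 hw
  refine mem_rightSpecials.2 ⟨hL.mem_of_infix hwL (List.drop_suffix k w).isInfix, by simp [hlen],
    hrs.trans_le (Set.ncard_le_ncard (hL.depSet_subset_of_suffix (List.drop_suffix k w))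
      (Set.toFinite _))⟩

theorem card_rightSpecials_le (n : ℕ) : (rightSpecials L n).card ≤ complexityDiff L n := by
  rw [Finset.card_eq_sum_ones]
  calc ∑ w ∈ rightSpecials L n, 1
      ≤ ∑ w ∈ rightSpecials L n, ((depSet L w).ncard - 1) := Finset.sum_le_sum fun w hw => by
        have := (mem_rightSpecials.1 hw).2.2
        unfold RightSpecial at this
        omega
    _ ≤ complexityDiff L n := Finset.sum_le_sum_of_subset (Finset.filter_subset _ _)

theorem exists_cons_mem_rightSpecials (hL : IsLanguage L) (hns : ∀ w, ¬ StrongBispecial L w)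
    (hs : complexityDiff L (n + 1) = complexityDiff L n) (hw : w ∈ rightSpecials L n) :
    ∃ a, a :: w ∈ rightSpecials L (n + 1) := by
  obtain ⟨hwL, hlen, hrs⟩ := mem_rightSpecials.1 hw
  -- equality in `complexityDiff_antitone` forces `m(u) - a(u) = d(u) - 1` for every `u`
  have hneutral : extCount L w - (arrSet L w).ncard = (depSet L w).ncard - 1 := by
    refine (Finset.sum_eq_sum_iff_of_le (g := fun u => (depSet L u).ncard - 1) fun u hu => ?_).1
      (by rw [← complexityDiff_succ hL, hs, complexityDiff]) w
      (mem_wordsOfLength.2 ⟨hwL, hlen⟩)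
    have := extCount_add_one_le hL (mem_wordsOfLength.1 hu).1 (hns u)
    omega
  by_contra! hno
  have hm : extCount L w ≤ (arrSet L w).ncard := by
    rw [extCount_eq_sum hL, Set.ncard_eq_toFinset_card', Finset.card_eq_sum_ones]
    refine Finset.sum_le_sum fun a ha => not_lt.1 fun hd => hno a ?_
    exact mem_rightSpecials.2 ⟨(Set.mem_toFinset.1 ha : a ∈ arrSet L w), by simp [hlen], hd⟩
  unfold RightSpecial at hrs
  omega

theorem exists_forall_ge_surjOn_drop_one (hL : IsLanguage L) (hns : ∀ w, ¬ StrongBispecial L w) :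
    ∃ N, ∀ n ≥ N, Set.SurjOn (List.drop 1) (rightSpecials L (n + 1) : Set (List A))
      (rightSpecials L n) := by
  obtain ⟨N, hN⟩ := Nat.exists_forall_ge_eq_of_antitone (complexityDiff_antitone hL hns)
  refine ⟨N, fun n hn w hw => ?_⟩
  obtain ⟨a, ha⟩ :=
    exists_cons_mem_rightSpecials hL hns (by rw [hN n hn, hN (n + 1) (by omega)]) hw
  exact ⟨a :: w, ha, rfl⟩

theorem exists_forall_ge_injOn_drop_one (hL : IsLanguage L) (hns : ∀ w, ¬ StrongBispecial L w) :
    ∃ N, ∀ n ≥ N, Set.InjOn (List.drop 1) (rightSpecials L (n + 1) : Set (List A)) := by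
  obtain ⟨N₀, hsurj⟩ := exists_forall_ge_surjOn_drop_one hL hns
  have hmono : ∀ n ≥ N₀, (rightSpecials L n).card ≤ (rightSpecials L (n + 1)).card :=
    fun n hn => Finset.card_le_card_of_surjOn _ (hsurj n hn)
  have hbdd : ∀ n, (rightSpecials L n).card ≤ complexityDiff L 0 := fun n =>
    (card_rightSpecials_le n).trans (complexityDiff_antitone hL hns (Nat.zero_le n))
  obtain ⟨N₁, hN₁⟩ := Nat.exists_forall_ge_eq_of_antitone
    (f := fun k => complexityDiff L 0 - (rightSpecials L (N₀ + k)).card)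
    (antitone_nat_of_succ_le fun k => by
      have := hmono (N₀ + k) (by omega)
      rw [Nat.add_assoc] at this
      omega)
  refine ⟨N₀ + N₁, fun n hn => ?_⟩
  refine Finset.injOn_of_surjOn_of_card_le _ (fun u hu => ?_) (hsurj n (by omega)) ?_
  · simpa using drop_mem_rightSpecials (k := 1) hL hu
  · have h₁ := hN₁ (n - N₀) (by omega)
    have h₂ := hN₁ (n + 1 - N₀) (by omega)
    have b₁ := hbdd n
    have b₂ := hbdd (n + 1)
    rw [show N₀ + (n - N₀) = n by omega] at h₁
    rw [show N₀ + (n + 1 - N₀) = n + 1 by omega] at h₂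
    omega

theorem injOn_drop_rightSpecials (hL : IsLanguage L) {N : ℕ}
    (hinj : ∀ n ≥ N, Set.InjOn (List.drop 1) (rightSpecials L (n + 1) : Set (List A)))
    (k : ℕ) :
    Set.InjOn (List.drop k) (rightSpecials L (N + k) : Set (List A)) := by
  induction k with
  | zero => exact Set.injOn_id _
  | succ k ih =>
    intro u hu u' hu' h
    have hdrop : ∀ u : List A, u.drop (k + 1) = (u.drop 1).drop k := fun u => by
      rw [List.drop_drop, Nat.add_comm]
    rw [hdrop, hdrop] at h
    exact hinj (N + k) (by omega) hu hu' (ih (drop_mem_rightSpecials (n := N + k) (k := 1) hL hu)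
      (drop_mem_rightSpecials (n := N + k) (k := 1) hL hu') h)

end RightSpecials

section InfiniteWords

variable {x : ℤ → A} {L : Set (List A)} {ω : Stream' A} {v : List A}

theorem streamFrom_eq_of_not_rightSpecial [Finite A] {q : ℤ} {n : ℕ} (hxL : FactorsZ x ⊆ L)
    (hω : ∀ m, ω.take m ∈ L) (hrs : ∀ m ≥ n, ¬ RightSpecial L (ω.take m))
    (hq : (streamFrom x q).take n = ω.take n) : streamFrom x q = ω := by
  have htake : ∀ k, (streamFrom x q).take (n + k) = ω.take (n + k) := by
    intro k
    induction k with
    | zero => exact hq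
    | succ k ih =>
      have hx : ω.take (n + k) ++ [(streamFrom x q).get (n + k)] ∈ L := by
        rw [← ih, ← Stream'.take_succ']
        exact hxL (take_streamFrom_mem_factorsZ q _)
      have hω' : ω.take (n + k) ++ [ω.get (n + k)] ∈ L := by
        rw [← Stream'.take_succ']
        exact hω _
      rw [← Nat.add_assoc, Stream'.take_succ', Stream'.take_succ', ih,
        eq_of_not_rightSpecial (hrs (n + k) (by omega)) hx hω']
  refine Stream'.take_theorem _ _ fun m => ?_
  have h := congrArg (List.take m) (htake m)
  rwa [Stream'.take_take, Stream'.take_take, min_eq_right (by omega)] at h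

theorem exists_pos_take_drop_eq_of_not_rightSpecial [Finite A] {n : ℕ} (hrr : RightRec x)
    (hxL : FactorsZ x ⊆ L) (hω : ∀ m, ω.take m ∈ FactorsZ x)
    (hrs : ∀ m ≥ n, ¬ RightSpecial L (ω.take m)) (hv : v ∈ FactorsZ x) :
    ∃ i > 0, (ω.drop i).take v.length = v := by
  obtain ⟨q, hq⟩ := hω n
  rw [occursAtZ_iff_take_streamFrom, Stream'.length_take] at hq
  have hxω := streamFrom_eq_of_not_rightSpecial hxL (fun m => hxL (hω m)) hrs hq
  obtain ⟨t, ht, hvt⟩ := hrr v hv (q + 1)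
  obtain ⟨i, rfl⟩ : ∃ i : ℕ, t = q + i := ⟨(t - q).toNat, by omega⟩
  refine ⟨i, by omega, ?_⟩
  rwa [← hxω, drop_streamFrom, ← occursAtZ_iff_take_streamFrom]

theorem exists_pos_take_drop_eq_take [Fintype A] (hL : IsLanguage L)
    (hns : ∀ w, ¬ StrongBispecial L w) (hω : ∀ m, ω.take m ∈ L)
    (hrs : ∀ n, ∃ m ≥ n, RightSpecial L (ω.take m)) (n₀ : ℕ) :
    ∃ m ≥ n₀, ∃ i > 0, (ω.drop i).take m = ω.take m := by
  obtain ⟨N, hN⟩ := exists_forall_ge_injOn_drop_one hL hns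
  have hS : {m | max N n₀ ≤ m ∧ RightSpecial L (ω.take m)}.Infinite :=
    Nat.frequently_atTop_iff_infinite.1 (Filter.frequently_atTop.2 fun n =>
      (hrs (max n (max N n₀))).imp fun m ⟨hm, h⟩ => ⟨by omega, by omega, h⟩)
  have hmem : ∀ m, RightSpecial L (ω.take m) → ω.take m ∈ rightSpecials L m := fun m h =>
    mem_rightSpecials.2 ⟨hω m, Stream'.length_take _ _, h⟩
  -- right special prefixes of `ω` are determined by their suffix of length `N`
  obtain ⟨m₁, h₁, m₂, h₂, hne, heq⟩ := hS.exists_ne_map_eq_of_mapsTo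
    (f := fun m => (ω.take m).drop (m - N)) (t := (rightSpecials L N : Set (List A)))
    (fun m ⟨hm, h⟩ => drop_mem_rightSpecials (n := N) hL
      (by rw [Nat.add_sub_of_le (by omega)]; exact hmem m h))
    (Finset.finite_toSet _)
  wlog hlt : m₁ < m₂ generalizing m₁ m₂
  · exact this m₂ h₂ m₁ h₁ hne.symm heq.symm (by omega)
  refine ⟨m₁, le_of_max_le_right h₁.1, m₂ - m₁, by omega, ?_⟩
  have hN₁ : N + (m₁ - N) = m₁ := Nat.add_sub_of_le (le_of_max_le_left h₁.1)
  rw [Stream'.take_drop, Nat.sub_add_cancel hlt.le]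
  refine injOn_drop_rightSpecials hL hN (m₁ - N) ?_ (by rw [hN₁]; exact hmem m₁ h₁.2) ?_
  · exact drop_mem_rightSpecials hL
      (by rw [hN₁, Nat.add_sub_of_le hlt.le]; exact hmem m₂ h₂.2)
  · simp only [List.drop_drop]
    rw [show m₂ - m₁ + (m₁ - N) = m₂ - N by omega]
    exact heq.symm

end InfiniteWords

theorem uniformlyRecurrent_factorsZ [Fintype A] {L : Set (List A)} (hL : IsLanguage L)
    (hns : ∀ w, ¬ StrongBispecial L w) {x : ℤ → A} (hx : x ∈ XL L) (hrr : RightRec x) :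
    UniformlyRecurrent (FactorsZ x) := by
  intro v hv
  by_contra! hgap
  have hxL := factorsZ_subset_of_mem_XL hx
  obtain ⟨ω, hω⟩ := Stream'.exists_forall_take_prefix
    (S := {α | α ∈ FactorsZ x ∧ OccursOnlyAsPrefix v α}) fun n =>
      (exists_occursOnlyAsPrefix_of_forall_not_infix hrr hv hgap n).imp
        fun α ⟨hα, hvα, hn⟩ => ⟨⟨hα, hvα⟩, hn⟩
  have hωx : ∀ m, ω.take m ∈ FactorsZ x := fun m =>
    let ⟨_, ⟨hα, _⟩, hpre⟩ := hω m
    infix_mem_factorsZ hα hpre.isInfix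
  have hωv : ω.take v.length = v := by
    obtain ⟨α, ⟨-, hvα, -⟩, hpre⟩ := hω v.length
    exact (List.prefix_of_prefix_length_le hpre hvα (by simp)).eq_of_length (by simp)
  have hnot : ∀ i > 0, (ω.drop i).take v.length ≠ v := by
    intro i hi hvi
    obtain ⟨α, ⟨-, -, honly⟩, hpre⟩ := hω (i + v.length)
    apply honly i hi
    rw [← hvi, Stream'.take_drop]
    exact hpre.drop i
  have hrs : ∀ n, ∃ m ≥ n, RightSpecial L (ω.take m) := by
    intro n
    by_contra! h
    obtain ⟨i, hi, hvi⟩ := exists_pos_take_drop_eq_of_not_rightSpecial hrr hxL hωx h hv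
    exact hnot i hi hvi
  obtain ⟨m, hm, i, hi, hmi⟩ :=
    exists_pos_take_drop_eq_take hL hns (fun m => hxL (hωx m)) hrs v.length
  apply hnot i hi
  have h := congrArg (List.take v.length) hmi
  rwa [Stream'.take_take, Stream'.take_take, min_eq_right hm, hωv] at h

/-- without strong bispecials, a right recurrent bi-infinite
sequence of `X_L` is also left recurrent, and its language of factors is
uniformly recurrent. -/
theorem stmt12 [Fintype A] (L : Set (List A)) (hL : IsLanguage L)
    (hns : ∀ w : List A, ¬ StrongBispecial L w)
    (x : ℤ → A) (hx : x ∈ XL L) (hrr : RightRec x) :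
    LeftRec x ∧ UniformlyRecurrent (FactorsZ x) := by
  have hUR := uniformlyRecurrent_factorsZ hL hns hx hrr
  exact ⟨leftRec_of_uniformlyRecurrent hUR, hUR⟩
end

section
/- Let T be a generalized ℱ-flipped interval exchange transformation with defining open intervals I_e, e ∈ 𝒜. Then the natural coding language L(T) satisfies the ℱ-flipped order condition determined by the orders <_D (left-to-right order of the intervals I_e) and <_A (left-to-right order of the intervals TI_e). -/
open List Set

variable {A : Type*}

variable {F : Finset A}

/-! Take `x ∈ T I_a` and `y ∈ T I_b` whose next `|w| + 1` steps are coded by `w c` and `w d`.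
While both points follow `w`, each step of `T` preserves their order, except at a letter of `F`,
which reverses it; so after `|w|` steps their order is the original one or its reverse according
to the parity of the number of `F`-letters in `w`. As the intervals are open and pairwise
disjoint, the order of two points lying in different intervals is the order of those intervals. -/

theorem right_le_left_iff_lt_of_disjoint_Ioo {α : Type*} [LinearOrder α] [DenselyOrdered α]
    {l₁ r₁ l₂ r₂ x y : α} (hd : Disjoint (Ioo l₁ r₁) (Ioo l₂ r₂)) (hx : x ∈ Ioo l₁ r₁)
    (hy : y ∈ Ioo l₂ r₂) : r₁ ≤ l₂ ↔ x < y := by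
  refine ⟨fun h => hx.2.trans_le h |>.trans hy.1, fun hxy => ?_⟩
  by_contra! h
  obtain ⟨z, hz₁, hz₂⟩ : ∃ z, max x l₂ < z ∧ z < min y r₁ :=
    exists_between (max_lt_iff.2 ⟨lt_min hxy hx.2, lt_min hy.1 h⟩)
  rw [max_lt_iff] at hz₁
  rw [lt_min_iff] at hz₂
  exact hd.ne_of_mem ⟨hx.1.trans hz₁.1, hz₂.2⟩ ⟨hz₁.2, hz₂.1.trans hy.2⟩ rfl

section Itinerary

variable {α : Type*} [DecidableEq A] {T : α → α} {S : A → Set α}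

theorem lt_ite_iterate_of_itinerary [Preorder α]
    (hmono : ∀ e ∉ F, StrictMonoOn T (S e)) (hanti : ∀ e ∈ F, StrictAntiOn T (S e)) :
    ∀ (w : List A) {x y : α}, (∀ i (hi : i < w.length), T^[i] x ∈ S w[i] ∧ T^[i] y ∈ S w[i]) →
      x < y → if Even (w.countP fun e => decide (e ∈ F)) then T^[w.length] x < T^[w.length] y
        else T^[w.length] y < T^[w.length] x
  | [], _, _, _, hxy => by simpa using hxy
  | e :: w, x, y, hw, hxy => by
    have hw' := fun i (hi : i < w.length) => hw (i + 1) (Nat.succ_lt_succ hi)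
    simp only [Function.iterate_succ_apply, List.getElem_cons_succ] at hw'
    obtain ⟨hx, hy⟩ := hw 0 (Nat.succ_pos _)
    by_cases he : e ∈ F
    · have ih := lt_ite_iterate_of_itinerary hmono hanti w (fun i hi => (hw' i hi).symm)
        (hanti e he hx hy hxy)
      simpa only [List.countP_cons, he, decide_true, if_true, Nat.even_add_one, ite_not,
        List.length_cons, Function.iterate_succ_apply] using ih
    · have ih := lt_ite_iterate_of_itinerary hmono hanti w hw' (hmono e he hx hy hxy)
      simpa [List.countP_cons, he] using ih

theorem lt_iff_ite_iterate_of_itinerary [LinearOrder α]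
    (hmono : ∀ e ∉ F, StrictMonoOn T (S e)) (hanti : ∀ e ∈ F, StrictAntiOn T (S e))
    {w : List A} {x y : α} (hw : ∀ i (hi : i < w.length), T^[i] x ∈ S w[i] ∧ T^[i] y ∈ S w[i])
    (hne : x ≠ y) :
    x < y ↔ if Even (w.countP fun e => decide (e ∈ F)) then T^[w.length] x < T^[w.length] y
      else T^[w.length] y < T^[w.length] x := by
  refine ⟨lt_ite_iterate_of_itinerary hmono hanti w hw, fun h => ?_⟩
  by_contra hxy
  have := lt_ite_iterate_of_itinerary hmono hanti w (fun i hi => (hw i hi).symm)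
    (lt_of_le_of_ne (not_lt.1 hxy) hne.symm)
  split_ifs at h this <;> exact lt_asymm h this

end Itinerary

namespace GIET

variable (G : GIET A F)

theorem iterate_eq_of_isOrbit {u : ℤ → A} {p : ℤ → ℝ} (hp : G.IsOrbit u p) (m : ℤ) :
    ∀ i : ℕ, G.T^[i] (p m) = p (m + i)
  | 0 => by simp
  | i + 1 => by
    rw [Function.iterate_succ_apply', iterate_eq_of_isOrbit hp m i, hp.1]
    push_cast
    ring_nf

theorem exists_itinerary_of_mem_lang {v : List A} (hv : v ∈ G.lang) :
    ∃ x, ∀ i (hi : i < v.length), G.T^[i] x ∈ Ioo (G.l v[i]) (G.r v[i]) := by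
  obtain ⟨u, p, hp, m, hm⟩ := hv
  refine ⟨p m, fun i hi => ?_⟩
  rw [iterate_eq_of_isOrbit G hp, List.getElem_of_eq hm.symm hi, List.getElem_ofFn]
  exact hp.2 _

theorem exists_mem_image_itinerary_of_mem_lang {w : List A} {a c : A}
    (h : a :: (w ++ [c]) ∈ G.lang) :
    ∃ x ∈ Ioo (G.l' a) (G.r' a), (∀ i (hi : i < w.length), G.T^[i] x ∈ Ioo (G.l w[i]) (G.r w[i]))
      ∧ G.T^[w.length] x ∈ Ioo (G.l c) (G.r c) := by
  obtain ⟨x, hx⟩ := G.exists_itinerary_of_mem_lang h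
  refine ⟨G.T x, G.img a ▸ mem_image_of_mem _ (by simpa using hx 0 (by simp)), fun i hi => ?_, ?_⟩
  · have := hx (i + 1) (by simp; omega)
    rwa [Function.iterate_succ_apply, List.getElem_cons_succ, List.getElem_append_left hi] at this
  · have := hx (w.length + 1) (by simp)
    rw [Function.iterate_succ_apply, List.getElem_cons_succ] at this
    simpa using this

end GIET

theorem stmt16_general [DecidableEq A] (F : Finset A) (G : GIET A F) :
    FlippedOC G.lang F
      (fun e f => G.r' e ≤ G.l' f)   -- e <_A f : T I_e strictly left of T I_f
      (fun e f => G.r e ≤ G.l f)     -- e <_D f : I_e strictly left of I_f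
    := by
  intro w _ a b c d hab hcd ha hb
  obtain ⟨x, hxa, hxw, hxc⟩ := G.exists_mem_image_itinerary_of_mem_lang ha
  obtain ⟨y, hyb, hyw, hyd⟩ := G.exists_mem_image_itinerary_of_mem_lang hb
  beta_reduce
  rw [right_le_left_iff_lt_of_disjoint_Ioo (G.disj' a b hab) hxa hyb,
    lt_iff_ite_iterate_of_itinerary G.inc G.dec (fun i hi => ⟨hxw i hi, hyw i hi⟩)
      ((G.disj' a b hab).ne_of_mem hxa hyb),
    right_le_left_iff_lt_of_disjoint_Ioo (G.disj c d hcd) hxc hyd,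
    right_le_left_iff_lt_of_disjoint_Ioo (G.disj d c hcd.symm) hyd hxc]

/-- the natural coding of a generalized `F`-flipped interval
exchange transformation satisfies the `F`-flipped order condition determined by
the left-to-right order `<_D` of the intervals `I_e` and the left-to-right
order `<_A` of the intervals `T I_e`. -/
theorem stmt16 [Fintype A] [DecidableEq A] (F : Finset A) (G : GIET A F) :
    FlippedOC G.lang F
      (fun e f => G.r' e ≤ G.l' f)   -- e <_A f : T I_e strictly left of T I_f
      (fun e f => G.r e ≤ G.l f)     -- e <_D f : I_e strictly left of I_f
    :=
  stmt16_general F G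
end

section
/- Let T be an ℱ-flipped affine interval exchange transformation whose slope on the defining interval I_e has absolute value exp(θ_e). If z ∈ X_{L(T)} is a non-recurrent sequence, then both series Σ_{n≥0} exp(Σ_{j=0}^{n} θ_{z_j}) and Σ_{n>0} exp(−Σ_{j=−n}^{−1} θ_{z_j}) converge. -/
open List Set

variable {A : Type*}

variable {F : Finset A}

/-!
Non-recurrence of `z` on one side gives a block of `z` with a last occurrence, at `a` say; if it is
recurrence to the left that fails, pass to the inverse transformation and the reversed sequence.
The cylinders `C_b` of points following `z` for `b` steps from `a` decrease, and each strict
shrinking `C_{b+1} ≠ C_b` puts an endpoint of an interval `I e` inside `T^b C_b`. For `b` beyond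
the block length these sets are pairwise disjoint, since `T` is injective and the block does not
reappear, so there are finitely many shrinkings: `C_b` stabilizes to an open interval `W` of
positive length. Its forward images are disjoint subintervals of `(0, 1)` of length
`exp (θ_{z_a} + ⋯ + θ_{z_{a+n-1}}) |W|`, which gives the forward series.
For the backward series, the sets `W_k` of points following `z` forever from `a - k` are pairwise
disjoint for the same reason, and `T^k W_k` decreases; a strict decrease puts an endpoint of an
image interval `I' e` inside `W_k`, so `T^k W_k` also stabilizes, to a set of positive length `δ`,
and `|W_k| = exp (-(θ_{z_{a-1}} + ⋯ + θ_{z_{a-k}})) δ`.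
-/

open MeasureTheory Filter Function Real

theorem Set.OrdConnected.left_mem_or_right_mem {α : Type*} [LinearOrder α] {K : Set α} {p q : α}
    (hK : K.OrdConnected) (hmeet : (K ∩ Ioo p q).Nonempty) (hout : ¬ K ⊆ Ioo p q) :
    p ∈ K ∨ q ∈ K := by
  obtain ⟨x, hxK, hpx, hxq⟩ := hmeet
  obtain ⟨y, hyK, hy⟩ := Set.not_subset.mp hout
  rcases le_or_gt y p with hyp | hpy
  · exact Or.inl (hK.out hyK hxK ⟨hyp, hpx.le⟩)
  · have hqy : q ≤ y := not_lt.mp fun hyq => hy ⟨hpy, hyq⟩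
    exact Or.inr (hK.out hxK hyK ⟨hxq.le, hqy⟩)

theorem Set.union_range_inter_nonempty {ι α : Type*} {f g : ι → α} {K : Set α} {i : ι}
    (h : f i ∈ K ∨ g i ∈ K) : ((range f ∪ range g) ∩ K).Nonempty :=
  h.elim (fun h => ⟨_, Or.inl ⟨i, rfl⟩, h⟩) fun h => ⟨_, Or.inr ⟨i, rfl⟩, h⟩

theorem Set.InjOn.iterate_setOf {α : Type*} {f : α → α} {s : Set α} (h : InjOn f s)
    (n : ℕ) : InjOn f^[n] {x | ∀ i < n, f^[i] x ∈ s} := by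
  induction n with
  | zero => exact fun _ _ _ _ hxy => hxy
  | succ n ih =>
    intro x hx y hy hxy
    rw [iterate_succ_apply', iterate_succ_apply'] at hxy
    exact ih (fun i hi => hx i (by omega)) (fun i hi => hy i (by omega))
      (h (hx n n.lt_succ_self) (hy n n.lt_succ_self) hxy)

theorem Set.Finite.setOf_inter_nonempty {ι α : Type*} {E : Set α} (hE : E.Finite)
    {K : ι → Set α} (hK : Pairwise (_root_.Disjoint on K)) :
    {i | (E ∩ K i).Nonempty}.Finite := by
  have hunion : {i | (E ∩ K i).Nonempty} = ⋃ e ∈ E, {i | e ∈ K i} := by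
    ext i
    simp [Set.Nonempty]
  rw [hunion]
  refine hE.biUnion fun e _ => Set.Subsingleton.finite fun i hi j hj => ?_
  by_contra hij
  exact Set.disjoint_left.mp (hK hij) hi hj

theorem exists_forall_ge_eq_of_finite_setOf_succ_ne {α : Type*} {f : ℕ → α}
    (h : {n | f (n + 1) ≠ f n}.Finite) : ∃ N, ∀ n, N ≤ n → f n = f N := by
  obtain ⟨M, hM⟩ := h.bddAbove
  refine eventuallyConst_atTop.mp (eventuallyConst_atTop_nat.mpr ⟨M + 1, fun n hn => ?_⟩)
  by_contra hne
  have := hM hne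
  omega

theorem StrictMonoOn.continuousOn_of_isOpen_image {f : ℝ → ℝ} {s : Set ℝ}
    (hf : StrictMonoOn f s) (hs : IsOpen s) (himg : IsOpen (f '' s)) : ContinuousOn f s :=
  fun _ hx => (continuousAt_of_monotoneOn_of_image_mem_nhds hf.monotoneOn (hs.mem_nhds hx)
    (himg.mem_nhds (mem_image_of_mem f hx))).continuousWithinAt

theorem StrictAntiOn.continuousOn_of_isOpen_image {f : ℝ → ℝ} {s : Set ℝ}
    (hf : StrictAntiOn f s) (hs : IsOpen s) (himg : IsOpen (f '' s)) : ContinuousOn f s := by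
  have hneg : ContinuousOn (fun x => -f x) s := by
    refine StrictMonoOn.continuousOn_of_isOpen_image
      (fun x hx y hy hxy => neg_lt_neg (hf hx hy hxy)) hs ?_
    rw [← image_image (fun y => -y) f, image_neg_eq_neg]
    exact himg.neg
  exact (hneg.neg).congr fun x _ => (neg_neg (f x)).symm

open Pointwise in
theorem Real.volume_image_mul_add (m c : ℝ) (S : Set ℝ) :
    volume ((fun x => m * x + c) '' S) = ENNReal.ofReal |m| * volume S := by
  have : (fun x => m * x + c) '' S = (fun x => x + c) '' (m • S) := by
    rw [← Set.image_smul, Set.image_image]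
    rfl
  rw [this, Set.image_add_right, measure_preimage_add_right, Measure.addHaar_smul,
    Module.finrank_self, pow_one]

theorem summable_of_measure_eq_ofReal_mul {α : Type*} [MeasurableSpace α] (μ : Measure α)
    {s : ℕ → Set α} {t : Set α} (hs : ∀ i, MeasurableSet (s i))
    (hdisj : Pairwise (_root_.Disjoint on s)) (hst : ∀ i, s i ⊆ t) (ht : μ t ≠ ⊤)
    {f : ℕ → ℝ} (hf : ∀ i, 0 ≤ f i) {c : ENNReal} (hc : c ≠ 0)
    (hμ : ∀ i, μ (s i) = ENNReal.ofReal (f i) * c) : Summable f := by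
  have hle : (∑' i, ENNReal.ofReal (f i)) * c ≤ μ t := by
    rw [← ENNReal.tsum_mul_right]
    simp_rw [← hμ]
    exact (tsum_meas_le_meas_iUnion_of_disjoint μ hs hdisj).trans
      (measure_mono (iUnion_subset hst))
  have hfin : ∑' i, ENNReal.ofReal (f i) ≠ ⊤ := fun htop => by
    rw [htop, ENNReal.top_mul hc] at hle
    exact ht (top_le_iff.mp hle)
  simpa [ENNReal.toReal_ofReal (hf _)] using ENNReal.summable_toReal hfin

theorem ofReal_exp_neg_mul_ofReal_exp_mul (x : ℝ) (v : ENNReal) :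
    ENNReal.ofReal (exp (-x)) * (ENNReal.ofReal (exp x) * v) = v := by
  rw [← mul_assoc, ← ENNReal.ofReal_mul (exp_pos _).le, ← exp_add, neg_add_cancel, exp_zero,
    ENNReal.ofReal_one, one_mul]

theorem summable_exp_sum_add_one_iff (f : ℤ → ℝ) (a : ℤ) :
    Summable (fun n : ℕ => exp (∑ j ∈ Finset.range n, f (a + 1 + j))) ↔
      Summable (fun n : ℕ => exp (∑ j ∈ Finset.range n, f (a + j))) := by
  rw [← summable_nat_add_iff 1 (f := fun n : ℕ => exp (∑ j ∈ Finset.range n, f (a + j))),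
    ← summable_mul_left_iff (exp_ne_zero (f a))]
  refine Iff.of_eq (congrArg Summable (funext fun n => ?_))
  rw [Finset.sum_range_succ', exp_add, mul_comm]
  push_cast
  simp only [add_zero, add_assoc, add_comm (1 : ℤ)]

theorem summable_exp_sum_add_iff (f : ℤ → ℝ) (a : ℤ) :
    Summable (fun n : ℕ => exp (∑ j ∈ Finset.range n, f (a + j))) ↔
      Summable (fun n : ℕ => exp (∑ j ∈ Finset.range n, f j)) := by
  induction a using Int.induction_on with
  | zero => simp
  | succ i ih => rw [summable_exp_sum_add_one_iff, ih]
  | pred i ih => rw [← ih, ← summable_exp_sum_add_one_iff, sub_add_cancel]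

theorem sum_range_sub_add_eq (f : ℤ → ℝ) (a : ℤ) (k : ℕ) :
    ∑ j ∈ Finset.range k, f (a - k + j) = ∑ j ∈ Finset.range k, f (a - 1 - j) := by
  rw [← Finset.sum_range_reflect]
  refine Finset.sum_congr rfl fun j hj => ?_
  have := Finset.mem_range.mp hj
  congr 1
  omega

def IsLastOccurrence (z : ℤ → A) (a : ℤ) (ℓ : ℕ) : Prop :=
  ∀ k : ℤ, 0 < k → ∃ i < ℓ, z (a + k + i) ≠ z (a + i)

def IsFirstOccurrence (z : ℤ → A) (a : ℤ) (ℓ : ℕ) : Prop :=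
  ∀ k : ℤ, 0 < k → ∃ i < ℓ, z (a - k + i) ≠ z (a + i)

theorem IsFirstOccurrence.reverse {z : ℤ → A} {a : ℤ} {ℓ : ℕ}
    (h : IsFirstOccurrence z a ℓ) :
    IsLastOccurrence (fun t => z (-t - 1)) (-a - ℓ) ℓ := by
  intro k hk
  obtain ⟨i, hi, hne⟩ := h k hk
  refine ⟨ℓ - 1 - i, by omega, fun heq => hne ?_⟩
  convert heq using 2 <;> omega

theorem occursAtZ_of_forall_eq {x : ℤ → A} {m m' : ℤ} {w : List A} (h : occursAtZ x m w)
    (heq : ∀ i < w.length, x (m' + i) = x (m + i)) : occursAtZ x m' w :=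
  (congrArg List.ofFn (funext fun i => heq i i.2)).trans h

theorem exists_isLastOccurrence_of_not_rightRec {z : ℤ → A} (h : ¬ RightRec z) :
    ∃ a ℓ, IsLastOccurrence z a ℓ := by
  classical
  simp only [RightRec, not_forall, not_exists, not_and] at h
  obtain ⟨w, ⟨m₀, hm₀⟩, N, hN⟩ := h
  obtain ⟨a, ha, hmax⟩ := Int.exists_greatest_of_bdd
    ⟨N, fun m hm => not_lt.mp fun hNm => hN m hNm.le hm⟩ ⟨m₀, hm₀⟩
  refine ⟨a, w.length, fun k hk => ?_⟩
  by_contra! hall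
  have := hmax _ (occursAtZ_of_forall_eq ha hall)
  omega

theorem exists_isFirstOccurrence_of_not_leftRec {z : ℤ → A} (h : ¬ LeftRec z) :
    ∃ a ℓ, IsFirstOccurrence z a ℓ := by
  classical
  simp only [LeftRec, not_forall, not_exists, not_and] at h
  obtain ⟨w, ⟨m₀, hm₀⟩, N, hN⟩ := h
  obtain ⟨a, ha, hmin⟩ := Int.exists_least_of_bdd
    ⟨N, fun m hm => not_lt.mp fun hmN => hN m hmN.le hm⟩ ⟨m₀, hm₀⟩
  refine ⟨a, w.length, fun k hk => ?_⟩
  by_contra! hall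
  have := hmin _ (occursAtZ_of_forall_eq ha hall)
  omega

namespace GIET

variable (G : GIET A F)

abbrev I (e : A) : Set ℝ := Ioo (G.l e) (G.r e)

abbrev I' (e : A) : Set ℝ := Ioo (G.l' e) (G.r' e)

theorem image_I (e : A) : G.T '' G.I e = G.I' e := G.img e

theorem T_mem_I' {e : A} {x : ℝ} (hx : x ∈ G.I e) : G.T x ∈ G.I' e :=
  (G.image_I e).subset ⟨x, hx, rfl⟩

theorem eq_of_mem_I {e f : A} {x : ℝ} (he : x ∈ G.I e) (hf : x ∈ G.I f) : e = f := by
  by_contra hef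
  exact Set.disjoint_left.mp (G.disj e f hef) he hf

theorem injOn_T : InjOn G.T (⋃ e, G.I e) := by
  intro x hx y hy hxy
  obtain ⟨e, hxe⟩ := mem_iUnion.mp hx
  obtain ⟨f, hyf⟩ := mem_iUnion.mp hy
  obtain rfl : e = f := by
    by_contra hef
    exact Set.disjoint_left.mp (G.disj' e f hef) (G.T_mem_I' hxe) (hxy ▸ G.T_mem_I' hyf)
  by_cases heF : e ∈ F
  · exact (G.dec e heF).injOn hxe hyf hxy
  · exact (G.inc e heF).injOn hxe hyf hxy

theorem isOpen_I_inter_preimage {K : Set ℝ} (hK : IsOpen K) (e : A) :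
    IsOpen (G.I e ∩ G.T ⁻¹' K) :=
  (G.cont e).isOpen_inter_preimage isOpen_Ioo hK

theorem ordConnected_I_inter_preimage {K : Set ℝ} (hK : K.OrdConnected) (e : A) :
    (G.I e ∩ G.T ⁻¹' K).OrdConnected := by
  refine ⟨fun x hx y hy t ht => ⟨ordConnected_Ioo.out hx.1 hy.1 ht, ?_⟩⟩
  have htI : t ∈ G.I e := ordConnected_Ioo.out hx.1 hy.1 ht
  by_cases heF : e ∈ F
  · have hmono := (G.dec e heF).antitoneOn
    exact hK.out hy.2 hx.2 ⟨hmono htI hy.1 ht.2, hmono hx.1 htI ht.1⟩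
  · have hmono := (G.inc e heF).monotoneOn
    exact hK.out hx.2 hy.2 ⟨hmono hx.1 htI ht.1, hmono htI hy.1 ht.2⟩

theorem ordConnected_image {S : Set ℝ} {e : A} (hS : S.OrdConnected) (hSI : S ⊆ G.I e) :
    (G.T '' S).OrdConnected :=
  isPreconnected_iff_ordConnected.mp
    ((isPreconnected_iff_ordConnected.mpr hS).image _ ((G.cont e).mono hSI))

def ScalesVolume (θ : A → ℝ) : Prop :=
  ∀ e, ∀ S ⊆ G.I e, volume (G.T '' S) = ENNReal.ofReal (exp (θ e)) * volume S

theorem scalesVolume_of_affine [DecidableEq A] {θ : A → ℝ}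
    (haff : ∀ e, ∃ c : ℝ, ∀ x ∈ Set.Ioo (G.l e) (G.r e),
      G.T x = (if e ∈ F then -Real.exp (θ e) else Real.exp (θ e)) * x + c) :
    G.ScalesVolume θ := by
  intro e S hS
  obtain ⟨c, hc⟩ := haff e
  rw [image_congr fun x hx => hc x (hS hx), Real.volume_image_mul_add]
  split_ifs <;> simp [abs_of_pos (exp_pos _)]

/-- A pointwise form of `z ∈ XL G.lang`; unlike the latter it transfers directly to `G.symm`. -/
def IsAdmissible (z : ℤ → A) : Prop :=
  ∀ (t : ℤ) (n : ℕ), ∃ u p, G.IsOrbit u p ∧ ∃ m : ℤ, ∀ i < n, u (m + i) = z (t + i)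

def cylinder (z : ℤ → A) (t : ℤ) (n : ℕ) : Set ℝ :=
  {x | ∀ i < n, G.T^[i] x ∈ G.I (z (t + i))}

def forwardCylinder (z : ℤ → A) (t : ℤ) : Set ℝ :=
  {x | ∀ i : ℕ, G.T^[i] x ∈ G.I (z (t + i))}

noncomputable def invT : ℝ → ℝ := invFunOn G.T (⋃ e, G.I e)

variable {G} {θ : A → ℝ} {z : ℤ → A}

theorem invT_T {e : A} {x : ℝ} (hx : x ∈ G.I e) : G.invT (G.T x) = x :=
  G.injOn_T.leftInvOn_invFunOn (mem_iUnion.mpr ⟨e, hx⟩)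

theorem invT_mem_I {e : A} {y : ℝ} (hy : y ∈ G.I' e) :
    G.invT y ∈ G.I e ∧ G.T (G.invT y) = y := by
  obtain ⟨x, hx, rfl⟩ := (G.img e).superset hy
  rw [invT_T hx]
  exact ⟨hx, rfl⟩

theorem image_invT (e : A) : G.invT '' G.I' e = G.I e := by
  rw [← image_I]
  exact G.injOn_T.leftInvOn_invFunOn.image_image' (subset_iUnion G.I e)

theorem strictMonoOn_invT {e : A} (he : e ∉ F) : StrictMonoOn G.invT (G.I' e) :=
  fun y hy y' hy' hyy' => by
    rw [← (G.inc e he).lt_iff_lt (invT_mem_I hy).1 (invT_mem_I hy').1, (invT_mem_I hy).2,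
      (invT_mem_I hy').2]
    exact hyy'

theorem strictAntiOn_invT {e : A} (he : e ∈ F) : StrictAntiOn G.invT (G.I' e) :=
  fun y hy y' hy' hyy' => by
    rw [← (G.dec e he).lt_iff_gt (invT_mem_I hy).1 (invT_mem_I hy').1, (invT_mem_I hy).2,
      (invT_mem_I hy').2]
    exact hyy'

theorem continuousOn_invT (e : A) : ContinuousOn G.invT (G.I' e) := by
  have himg : IsOpen (G.invT '' G.I' e) := image_invT e ▸ isOpen_Ioo
  by_cases he : e ∈ F
  · exact (strictAntiOn_invT he).continuousOn_of_isOpen_image isOpen_Ioo himg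
  · exact (strictMonoOn_invT he).continuousOn_of_isOpen_image isOpen_Ioo himg

theorem I'_subset (e : A) : G.I' e ⊆ Ioo 0 1 := by
  have h : Icc (G.l' e) (G.r' e) ⊆ Icc 0 1 :=
    G.cover'.symm ▸ subset_iUnion (fun f => Icc (G.l' f) (G.r' f)) e
  exact Ioo_subset_Ioo (h (left_mem_Icc.mpr (G.lt' e).le)).1
    (h (right_mem_Icc.mpr (G.lt' e).le)).2

variable (G) in
noncomputable def symm : GIET A F where
  l := G.l'
  r := G.r'
  T := G.invT
  lt := G.lt'
  sub := I'_subset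
  disj := G.disj'
  cover := G.cover'
  cont := continuousOn_invT
  inc _ he := strictMonoOn_invT he
  dec _ he := strictAntiOn_invT he
  l' := G.l
  r' := G.r
  lt' := G.lt
  img := image_invT
  disj' := G.disj
  cover' := G.cover

theorem ScalesVolume.symm (hθ : G.ScalesVolume θ) : G.symm.ScalesVolume (-θ) := by
  intro e S hS
  have hTS : G.T '' (G.invT '' S) = S := by
    rw [image_image, image_congr fun y hy => (invT_mem_I (hS hy)).2, image_id']
  have hvol := hθ e _ ((image_mono hS).trans (image_invT e).subset)
  rw [hTS] at hvol
  change volume (G.invT '' S) = ENNReal.ofReal (exp (-θ e)) * volume S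
  rw [hvol, ofReal_exp_neg_mul_ofReal_exp_mul]

theorem IsOrbit.symm {u : ℤ → A} {p : ℤ → ℝ} (h : G.IsOrbit u p) :
    G.symm.IsOrbit (fun n => u (-n - 1)) (fun n => p (-n)) := by
  refine ⟨fun n => ?_, fun n => ?_⟩
  · change G.invT (p (-n)) = p (-(n + 1))
    have := invT_T (h.2 (-(n + 1)))
    rwa [h.1, show -(n + 1) + 1 = -n by ring] at this
  · change p (-n) ∈ G.I' (u (-n - 1))
    have := G.T_mem_I' (h.2 (-n - 1))
    rwa [h.1, sub_add_cancel] at this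

theorem IsOrbit.iterate_apply {u : ℤ → A} {p : ℤ → ℝ} (h : G.IsOrbit u p) (m : ℤ)
    (i : ℕ) : G.T^[i] (p m) = p (m + i) := by
  induction i with
  | zero => simp
  | succ i ih => rw [iterate_succ_apply', ih, h.1, Nat.cast_succ, add_assoc]

theorem isAdmissible_of_mem_XL (hz : z ∈ XL G.lang) : G.IsAdmissible z := by
  intro t n
  obtain ⟨u, p, horb, m, hm⟩ := hz t n
  refine ⟨u, p, horb, m, fun i hi => ?_⟩
  have := congrArg (fun w : List A => w[i]?) hm
  simp only [List.getElem?_ofFn, List.length_ofFn] at this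
  simpa [hi] using this

theorem IsAdmissible.symm (hz : G.IsAdmissible z) : G.symm.IsAdmissible fun t => z (-t - 1) := by
  intro t n
  obtain ⟨u, p, horb, m, hm⟩ := hz (-t - n) n
  refine ⟨_, _, horb.symm, -m - n, fun i hi => ?_⟩
  have := hm (n - 1 - i) (by omega)
  convert this using 2 <;> omega

theorem cylinder_zero (t : ℤ) : G.cylinder z t 0 = univ := by
  simp [cylinder]

theorem cylinder_succ (t : ℤ) (n : ℕ) :
    G.cylinder z t (n + 1) = G.I (z t) ∩ G.T ⁻¹' G.cylinder z (t + 1) n := by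
  ext x
  simp only [cylinder, mem_ofPred_eq, mem_inter_iff, mem_preimage]
  constructor
  · intro h
    refine ⟨by simpa using h 0 (by omega), fun i hi => ?_⟩
    rw [← iterate_succ_apply, add_assoc, add_comm 1]
    exact_mod_cast h (i + 1) (by omega)
  · rintro ⟨h0, h⟩ (_ | i) hi
    · simpa using h0
    · rw [iterate_succ_apply]
      have := h i (by omega)
      rwa [add_assoc, add_comm 1] at this

theorem cylinder_anti {t : ℤ} {m n : ℕ} (hmn : m ≤ n) :
    G.cylinder z t n ⊆ G.cylinder z t m :=
  fun _ hx i hi => hx i (by omega)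

theorem forwardCylinder_subset_cylinder (t : ℤ) (n : ℕ) :
    G.forwardCylinder z t ⊆ G.cylinder z t n :=
  fun _ hx i _ => hx i

theorem cylinder_subset_setOf_mem_iUnion (t : ℤ) (n : ℕ) :
    G.cylinder z t n ⊆ {x | ∀ i < n, G.T^[i] x ∈ ⋃ e, G.I e} :=
  fun _ hx i hi => mem_iUnion.mpr ⟨_, hx i hi⟩

theorem iterate_mem_cylinder {t : ℤ} {k n : ℕ} {x : ℝ} (hx : x ∈ G.cylinder z t (k + n)) :
    G.T^[k] x ∈ G.cylinder z (t + k) n := by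
  intro i hi
  rw [← iterate_add_apply, add_assoc, ← Nat.cast_add, add_comm k]
  exact hx (i + k) (by omega)

theorem iterate_mem_forwardCylinder {t : ℤ} {x : ℝ} (hx : x ∈ G.forwardCylinder z t)
    (k : ℕ) : G.T^[k] x ∈ G.forwardCylinder z (t + k) := by
  intro i
  rw [← iterate_add_apply, add_assoc, ← Nat.cast_add, add_comm k]
  exact hx (i + k)

theorem forwardCylinder_eq_inter_preimage (t : ℤ) :
    G.forwardCylinder z t = G.I (z t) ∩ G.T ⁻¹' G.forwardCylinder z (t + 1) := by
  ext x
  refine ⟨fun hx => ⟨by simpa using hx 0, by simpa using G.iterate_mem_forwardCylinder hx 1⟩,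
    fun ⟨h0, h⟩ => ?_⟩
  rintro (_ | i)
  · simpa using h0
  · rw [iterate_succ_apply]
    have := h i
    rwa [add_assoc, add_comm 1] at this

theorem isOpen_cylinder (t : ℤ) (n : ℕ) : IsOpen (G.cylinder z t n) := by
  induction n generalizing t with
  | zero => simp [cylinder_zero]
  | succ n ih => rw [cylinder_succ]; exact G.isOpen_I_inter_preimage (ih _) _

theorem ordConnected_cylinder (t : ℤ) (n : ℕ) : (G.cylinder z t n).OrdConnected := by
  induction n generalizing t with
  | zero => simp [cylinder_zero, ordConnected_univ]
  | succ n ih => rw [cylinder_succ]; exact G.ordConnected_I_inter_preimage (ih _) _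

theorem image_iterate_subset_I {t : ℤ} {n i : ℕ} {S : Set ℝ} (hS : S ⊆ G.cylinder z t n)
    (hi : i < n) : G.T^[i] '' S ⊆ G.I (z (t + i)) := by
  rintro _ ⟨x, hx, rfl⟩
  exact hS hx i hi

theorem ordConnected_image_iterate {t : ℤ} {n : ℕ} {S : Set ℝ} (hS : S ⊆ G.cylinder z t n)
    (hSc : S.OrdConnected) {i : ℕ} (hi : i ≤ n) : (G.T^[i] '' S).OrdConnected := by
  induction i with
  | zero => simpa using hSc
  | succ i ih =>
    rw [iterate_succ', image_comp]
    exact G.ordConnected_image (ih (by omega)) (image_iterate_subset_I hS (by omega))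

theorem volume_image_iterate (hθ : G.ScalesVolume θ) {t : ℤ} {n : ℕ} {S : Set ℝ}
    (hS : S ⊆ G.cylinder z t n) {i : ℕ} (hi : i ≤ n) :
    volume (G.T^[i] '' S) =
      ENNReal.ofReal (exp (∑ j ∈ Finset.range i, θ (z (t + j)))) * volume S := by
  induction i with
  | zero => simp
  | succ i ih =>
    rw [iterate_succ', image_comp, hθ _ _ (image_iterate_subset_I hS (by omega)), ih (by omega),
      ← mul_assoc, ← ENNReal.ofReal_mul (exp_pos _).le, ← exp_add, Finset.sum_range_succ,
      add_comm (θ _)]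

theorem cylinder_succ_eq_iff (t : ℤ) (n : ℕ) :
    G.cylinder z t (n + 1) = G.cylinder z t n ↔
      G.T^[n] '' G.cylinder z t n ⊆ G.I (z (t + n)) := by
  refine ⟨fun h => h ▸ image_iterate_subset_I subset_rfl n.lt_succ_self, fun h => ?_⟩
  refine (cylinder_anti n.le_succ).antisymm fun x hx i hi => ?_
  rcases Nat.lt_succ_iff_lt_or_eq.mp hi with hi | rfl
  · exact hx i hi
  · exact h ⟨x, hx, rfl⟩

theorem endpoint_mem_image_of_cylinder_succ_ne {t : ℤ} {n : ℕ}
    (hne : (G.cylinder z t (n + 1)).Nonempty)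
    (hshrink : G.cylinder z t (n + 1) ≠ G.cylinder z t n) :
    ((range G.l ∪ range G.r) ∩ G.T^[n] '' G.cylinder z t n).Nonempty := by
  obtain ⟨x, hx⟩ := hne
  have hconn := ordConnected_image_iterate (S := G.cylinder z t n) subset_rfl
    (G.ordConnected_cylinder t n) le_rfl
  exact union_range_inter_nonempty <| hconn.left_mem_or_right_mem
    ⟨G.T^[n] x, ⟨x, cylinder_anti n.le_succ hx, rfl⟩, hx n n.lt_succ_self⟩
    fun h => hshrink ((cylinder_succ_eq_iff t n).mpr h)

theorem IsAdmissible.cylinder_nonempty (hz : G.IsAdmissible z) (t : ℤ) (n : ℕ) :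
    (G.cylinder z t n).Nonempty := by
  obtain ⟨u, p, horb, m, hm⟩ := hz t n
  refine ⟨p m, fun i hi => ?_⟩
  rw [horb.iterate_apply, ← hm i hi]
  exact horb.2 _

end GIET

namespace IsLastOccurrence

open GIET

variable {G : GIET A F} {z : ℤ → A} {a : ℤ} {ℓ : ℕ}

theorem disjoint_cylinder (h : IsLastOccurrence z a ℓ) {k : ℤ} (hk : 0 < k)
    {n : ℕ} (hn : ℓ ≤ n) : Disjoint (G.cylinder z a n) (G.cylinder z (a + k) n) := by
  refine Set.disjoint_left.mpr fun x hx hx' => ?_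
  obtain ⟨i, hi, hne⟩ := h k hk
  exact hne (G.eq_of_mem_I (hx' i (by omega)) (hx i (by omega)))

theorem disjoint_image_iterate_cylinder (h : IsLastOccurrence z a ℓ) {p q : ℕ}
    (hp : ℓ ≤ p) (hpq : p < q) :
    Disjoint (G.T^[p] '' G.cylinder z a p) (G.T^[q] '' G.cylinder z a q) := by
  obtain ⟨k, rfl⟩ := Nat.exists_eq_add_of_lt hpq
  refine Set.disjoint_left.mpr ?_
  rintro _ ⟨x, hx, rfl⟩ ⟨y, hy, hxy⟩
  have hy' : G.T^[k + 1] y ∈ G.cylinder z (a + (k + 1 : ℕ)) p :=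
    iterate_mem_cylinder (by rwa [show k + 1 + p = p + k + 1 by omega])
  have hxy' : x = G.T^[k + 1] y := by
    refine G.injOn_T.iterate_setOf p (cylinder_subset_setOf_mem_iUnion _ _ hx)
      (cylinder_subset_setOf_mem_iUnion _ _ hy') ?_
    rw [← hxy, ← iterate_add_apply, add_assoc]
  exact Set.disjoint_left.mp (h.disjoint_cylinder (by omega) hp) hx (hxy' ▸ hy')

theorem disjoint_forwardCylinder (h : IsLastOccurrence z a ℓ) {m n : ℕ}
    (hmn : m < n) : Disjoint (G.forwardCylinder z (a - m)) (G.forwardCylinder z (a - n)) := by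
  refine Set.disjoint_left.mpr fun x hxm hxn => ?_
  have h₁ : G.T^[n] x ∈ G.forwardCylinder z a := by
    simpa using iterate_mem_forwardCylinder hxn n
  have h₂ : G.T^[n] x ∈ G.forwardCylinder z (a + ((n : ℤ) - m)) := by
    simpa [sub_add_eq_add_sub, add_sub_assoc] using iterate_mem_forwardCylinder hxm n
  exact Set.disjoint_left.mp (h.disjoint_cylinder (by omega) le_rfl)
    (forwardCylinder_subset_cylinder _ _ h₁) (forwardCylinder_subset_cylinder _ _ h₂)

end IsLastOccurrence

namespace GIET

variable {G : GIET A F} {θ : A → ℝ} {z : ℤ → A} {a : ℤ} {ℓ b : ℕ}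

theorem forwardCylinder_eq_cylinder (hb : ∀ n, b ≤ n → G.cylinder z a n = G.cylinder z a b) :
    G.forwardCylinder z a = G.cylinder z a b := by
  refine (forwardCylinder_subset_cylinder a b).antisymm fun x hx i => ?_
  rw [← hb (max b (i + 1)) (le_max_left _ _)] at hx
  exact hx i (by omega)

theorem forwardCylinder_sub_eq (hb : G.forwardCylinder z a = G.cylinder z a b) (k : ℕ) :
    G.forwardCylinder z (a - k) = G.cylinder z (a - k) (k + b) := by
  refine (forwardCylinder_subset_cylinder _ _).antisymm fun x hx i => ?_
  by_cases hi : i < k + b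
  · exact hx i hi
  have hk : G.T^[k] x ∈ G.forwardCylinder z a := by
    rw [hb]
    simpa using iterate_mem_cylinder hx
  have := hk (i - k)
  rwa [← iterate_add_apply, Nat.sub_add_cancel (by omega),
    show a + (i - k : ℕ) = a - k + i by omega] at this

theorem image_iterate_forwardCylinder_succ (t : ℤ) (k : ℕ) :
    G.T^[k + 1] '' G.forwardCylinder z (t - (k + 1 : ℕ)) =
      G.T^[k] '' (G.I' (z (t - (k + 1 : ℕ))) ∩ G.forwardCylinder z (t - k)) := by
  rw [iterate_succ, image_comp, forwardCylinder_eq_inter_preimage, image_inter_preimage, G.img,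
    show t - (k + 1 : ℕ) + 1 = t - k by omega]

theorem summable_exp_sum_forward (hθ : G.ScalesVolume θ) (hz : G.IsAdmissible z)
    (h : IsLastOccurrence z a ℓ) (hℓ : ℓ ≤ b)
    (hb : ∀ n, b ≤ n → G.cylinder z a n = G.cylinder z a b) :
    Summable fun n : ℕ => exp (∑ j ∈ Finset.range n, θ (z (a + j))) := by
  have hW : ∀ i, G.cylinder z a b ⊆ G.cylinder z a (i + b) := fun i =>
    (hb _ (by omega)).superset
  rw [← summable_nat_add_iff b]
  refine summable_of_measure_eq_ofReal_mul volume (s := fun i => G.T^[i + b] '' G.cylinder z a b)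
    (fun i =>
      (ordConnected_image_iterate (hW i) (G.ordConnected_cylinder _ _) le_rfl).measurableSet)
    ((pairwise_disjoint_on _).mpr fun m n hmn => ?_)
    (fun i => (image_iterate_subset_I (hW (i + 1)) (by omega)).trans (G.sub _)) (by simp)
    (fun _ => (exp_pos _).le) ((G.isOpen_cylinder a b).measure_ne_zero _ (hz.cylinder_nonempty a b))
    fun i => volume_image_iterate hθ (hW i) le_rfl
  have := h.disjoint_image_iterate_cylinder (G := G) (p := m + b) (q := n + b) (by omega) (by omega)
  rwa [hb _ (by omega), hb (n + b) (by omega)] at this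

variable [Fintype A]

theorem IsAdmissible.exists_cylinder_eq (hz : G.IsAdmissible z) (h : IsLastOccurrence z a ℓ) :
    ∃ b, ℓ ≤ b ∧ ∀ n, b ≤ n → G.cylinder z a n = G.cylinder z a b := by
  have hfin : {k | G.cylinder z a (k + 1 + ℓ) ≠ G.cylinder z a (k + ℓ)}.Finite := by
    refine ((finite_range G.l).union (finite_range G.r)).setOf_inter_nonempty
      (K := fun k => G.T^[k + ℓ] '' G.cylinder z a (k + ℓ))
      ((pairwise_disjoint_on _).mpr fun m n hmn =>
        h.disjoint_image_iterate_cylinder (by omega) (by omega)) |>.subset fun k hk => ?_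
    rw [mem_ofPred_eq, add_right_comm] at hk
    exact endpoint_mem_image_of_cylinder_succ_ne (hz.cylinder_nonempty _ _) hk
  obtain ⟨N, hN⟩ := exists_forall_ge_eq_of_finite_setOf_succ_ne
    (f := fun k => G.cylinder z a (k + ℓ)) hfin
  refine ⟨N + ℓ, by omega, fun n hn => ?_⟩
  obtain ⟨k, rfl⟩ : ∃ k, n = k + ℓ := ⟨n - ℓ, by omega⟩
  exact hN k (by omega)

theorem IsAdmissible.exists_image_iterate_forwardCylinder_eq (hz : G.IsAdmissible z)
    (h : IsLastOccurrence z a ℓ) (hb : G.forwardCylinder z a = G.cylinder z a b) :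
    ∃ N, ∀ k, N ≤ k →
      G.T^[k] '' G.forwardCylinder z (a - k) = G.T^[N] '' G.forwardCylinder z (a - N) := by
  refine exists_forall_ge_eq_of_finite_setOf_succ_ne <|
    ((finite_range G.l').union (finite_range G.r')).setOf_inter_nonempty
      (K := fun k : ℕ => G.forwardCylinder z (a - k))
      ((pairwise_disjoint_on _).mpr fun m n hmn => h.disjoint_forwardCylinder hmn)
      |>.subset fun k hk => ?_
  have hout : ¬ G.forwardCylinder z (a - k) ⊆ G.I' (z (a - (k + 1 : ℕ))) := fun hs =>
    hk (by rw [image_iterate_forwardCylinder_succ, inter_eq_self_of_subset_right hs])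
  have hmeet : (G.forwardCylinder z (a - k) ∩ G.I' (z (a - (k + 1 : ℕ)))).Nonempty := by
    obtain ⟨x, hx⟩ := forwardCylinder_sub_eq hb (k + 1) ▸ hz.cylinder_nonempty _ _
    rw [forwardCylinder_eq_inter_preimage, show a - (k + 1 : ℕ) + 1 = a - k by omega] at hx
    exact ⟨G.T x, hx.2, G.T_mem_I' hx.1⟩
  have hconn : (G.forwardCylinder z (a - k)).OrdConnected :=
    forwardCylinder_sub_eq hb k ▸ G.ordConnected_cylinder _ _
  exact union_range_inter_nonempty (hconn.left_mem_or_right_mem hmeet hout)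

theorem summable_exp_sum_backward (hθ : G.ScalesVolume θ) (hz : G.IsAdmissible z)
    (h : IsLastOccurrence z a ℓ) (hb : G.forwardCylinder z a = G.cylinder z a b) :
    Summable fun n : ℕ => exp (-∑ j ∈ Finset.range n, θ (z (a - 1 - j))) := by
  obtain ⟨N, hN⟩ := hz.exists_image_iterate_forwardCylinder_eq h hb
  have hopen : ∀ k : ℕ, IsOpen (G.forwardCylinder z (a - k)) := fun k =>
    forwardCylinder_sub_eq hb k ▸ G.isOpen_cylinder _ _
  have hvol : ∀ k : ℕ, volume (G.T^[k] '' G.forwardCylinder z (a - k)) =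
      ENNReal.ofReal (exp (∑ j ∈ Finset.range k, θ (z (a - 1 - j)))) *
        volume (G.forwardCylinder z (a - k)) := fun k => by
    rw [volume_image_iterate hθ (forwardCylinder_subset_cylinder _ k) le_rfl,
      sum_range_sub_add_eq (fun t => θ (z t))]
  have hc : volume (G.T^[N] '' G.forwardCylinder z (a - N)) ≠ 0 := by
    rw [hvol]
    refine mul_ne_zero (ENNReal.ofReal_pos.mpr (exp_pos _)).ne' ((hopen N).measure_ne_zero _ ?_)
    exact forwardCylinder_sub_eq hb N ▸ hz.cylinder_nonempty _ _
  rw [← summable_nat_add_iff N]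
  refine summable_of_measure_eq_ofReal_mul volume
    (s := fun i => G.forwardCylinder z (a - (i + N : ℕ))) (fun i => (hopen _).measurableSet)
    ((pairwise_disjoint_on _).mpr fun m n hmn => h.disjoint_forwardCylinder (by omega))
    (fun i x hx => G.sub _ (by simpa using hx 0)) (by simp) (fun _ => (exp_pos _).le) hc
    fun i => ?_
  rw [← hN (i + N) (by omega), hvol, ofReal_exp_neg_mul_ofReal_exp_mul]

theorem summable_exp_sum_of_isLastOccurrence (hθ : G.ScalesVolume θ)
    (hz : G.IsAdmissible z) (h : IsLastOccurrence z a ℓ) :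
    Summable (fun n : ℕ => exp (∑ j ∈ Finset.range n, θ (z j))) ∧
      Summable (fun n : ℕ => exp (-∑ j ∈ Finset.range n, θ (z (-j - 1)))) := by
  obtain ⟨b, hℓ, hb⟩ := hz.exists_cylinder_eq h
  have hfwd := summable_exp_sum_forward hθ hz h hℓ hb
  have hbwd := summable_exp_sum_backward hθ hz h (forwardCylinder_eq_cylinder hb)
  refine ⟨(summable_exp_sum_add_iff (fun t => θ (z t)) a).mp hfwd, ?_⟩
  simp_rw [← Finset.sum_neg_distrib]
  refine (summable_exp_sum_add_iff (fun t => -θ (z (-t - 1))) (-a)).mp (hbwd.congr fun n => ?_)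
  rw [← Finset.sum_neg_distrib]
  refine congrArg exp (Finset.sum_congr rfl fun j _ => ?_)
  rw [show -(-a + j) - 1 = a - 1 - j by ring]

end GIET

/-- for an `F`-flipped affine interval exchange transformation
with slopes `±exp (θ e)`, any non-recurrent sequence `z` of `X_{L(T)}` has both
series `Σ_{n≥0} exp (Σ_{j=0}^{n} θ_{z_j})` and
`Σ_{n>0} exp (−Σ_{j=−n}^{−1} θ_{z_j})` convergent. -/
theorem stmt17 [Fintype A] (F : Finset A) [DecidableEq A] (G : GIET A F)
    (θ : A → ℝ)
    (haff : ∀ e, ∃ c : ℝ, ∀ x ∈ Set.Ioo (G.l e) (G.r e),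
      G.T x = (if e ∈ F then -Real.exp (θ e) else Real.exp (θ e)) * x + c)
    (z : ℤ → A) (hz : z ∈ XL G.lang) (hnr : ¬ RecurrentZ z) :
    Summable (fun n : ℕ =>
      Real.exp (∑ j ∈ Finset.range (n + 1), θ (z (j : ℤ)))) ∧
    Summable (fun n : ℕ =>
      Real.exp (-∑ j ∈ Finset.range (n + 1), θ (z (-(j : ℤ) - 1)))) := by
  have hθ := G.scalesVolume_of_affine haff
  have hadm := G.isAdmissible_of_mem_XL hz
  obtain ⟨hfwd, hbwd⟩ :
      Summable (fun n : ℕ => Real.exp (∑ j ∈ Finset.range n, θ (z j))) ∧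
      Summable (fun n : ℕ => Real.exp (-∑ j ∈ Finset.range n, θ (z (-j - 1)))) := by
    rcases not_and_or.mp hnr with hR | hL
    · obtain ⟨a, ℓ, h⟩ := exists_isLastOccurrence_of_not_rightRec hR
      exact GIET.summable_exp_sum_of_isLastOccurrence hθ hadm h
    · obtain ⟨a, ℓ, h⟩ := exists_isFirstOccurrence_of_not_leftRec hL
      have := GIET.summable_exp_sum_of_isLastOccurrence hθ.symm hadm.symm h.reverse
      simp only [Pi.neg_apply, Finset.sum_neg_distrib, neg_neg, neg_sub, sub_neg_eq_add,
        add_sub_cancel_left] at this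
      exact this.symm
  exact ⟨hfwd.comp_injective (add_left_injective 1), hbwd.comp_injective (add_left_injective 1)⟩
end

section
/- Let L be the language generated by the single bi-infinite sequence …1112111… (all letters 1 except a single 2). Then L satisfies the unflipped order condition with 1 <_D 2 and 2 <_A 1, but L is not the natural coding of any affine interval exchange transformation on two intervals. -/
open List Set

variable {A : Type*}

variable {F : Finset A}

/-- The language generated by the bi-infinite word `…1112111…` (letter `1` is
`0 : Fin 2` and letter `2` is `1 : Fin 2`): all words `1ⁿ` and `1ⁿ21ᵐ`. -/
def skewSturmian : Set (List (Fin 2)) :=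
  {w | ∃ n : ℕ, w = List.replicate n 0} ∪
  {w | ∃ n m : ℕ, w = List.replicate n 0 ++ 1 :: List.replicate m 0}

/-!
The only trajectory coded by `…1112111…` stays in `I₁` except for a single visit to `I₂`.
The only bounded forward orbits of an affine map of slope `s ≥ 1` are fixed points, and (applying
this to the inverse map) so are the only bounded backward orbits when `s ≤ 1`. In the first case
the point right after the visit is fixed, so it lies in both `T I₁` and `T I₂`; in the second the
point right before the visit is fixed, so it lies in both `I₁` and `I₂`.
-/

section AffineOrbit

variable {s c a b : ℝ} {y : ℕ → ℝ}

lemma affine_orbit_sub_succ (hy : ∀ n, y (n + 1) = s * y n + c) (n : ℕ) :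
    y (n + 1) - y n = s ^ n * (y 1 - y 0) := by
  induction n with
  | zero => simp
  | succ n ih => rw [pow_succ]; linear_combination hy (n + 1) - hy n + s * ih

lemma affine_orbit_natCast_mul_sq_le (hs : 1 ≤ s) (hy : ∀ n, y (n + 1) = s * y n + c) (n : ℕ) :
    n * (y 1 - y 0) ^ 2 ≤ (y 1 - y 0) * (y n - y 0) := by
  induction n with
  | zero => simp
  | succ n ih =>
    have hstep : (y 1 - y 0) * (y (n + 1) - y 0)
        = (y 1 - y 0) * (y n - y 0) + s ^ n * (y 1 - y 0) ^ 2 := by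
      rw [show y (n + 1) - y 0 = (y n - y 0) + (y (n + 1) - y n) by ring,
        affine_orbit_sub_succ hy n]
      ring
    have hpow : (y 1 - y 0) ^ 2 ≤ s ^ n * (y 1 - y 0) ^ 2 :=
      le_mul_of_one_le_left (sq_nonneg _) (one_le_pow₀ hs)
    push_cast
    linarith

lemma affine_orbit_isFixed_of_bounded (hs : 1 ≤ s) (hy : ∀ n, y (n + 1) = s * y n + c)
    (hb : ∀ n, y n ∈ Icc a b) : s * y 0 + c = y 0 := by
  set d := y 1 - y 0
  suffices hd : d = 0 by rw [← hy 0]; linarith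
  by_contra hd
  have hd_pos : 0 < |d| := abs_pos.mpr hd
  have hbound : ∀ n : ℕ, n * |d| ≤ b - a := by
    intro n
    have hyn : |y n - y 0| ≤ b - a :=
      abs_sub_le_iff.mpr ⟨by linarith [(hb n).2, (hb 0).1], by linarith [(hb n).1, (hb 0).2]⟩
    refine le_of_mul_le_mul_right ?_ hd_pos
    calc n * |d| * |d| = n * d ^ 2 := by rw [mul_assoc, abs_mul_abs_self, sq]
      _ ≤ d * (y n - y 0) := affine_orbit_natCast_mul_sq_le hs hy n
      _ ≤ |d| * |y n - y 0| := by rw [← abs_mul]; exact le_abs_self _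
      _ ≤ (b - a) * |d| := by rw [mul_comm]; exact mul_le_mul_of_nonneg_right hyn hd_pos.le
  obtain ⟨n, hn⟩ := exists_nat_gt ((b - a) / |d|)
  exact absurd (hbound n) (not_le.mpr ((div_lt_iff₀ hd_pos).mp hn))

end AffineOrbit

lemma GIET.IsOrbit.mem_XL_lang {G : GIET A F} {u : ℤ → A} {p : ℤ → ℝ} (h : G.IsOrbit u p) :
    u ∈ XL G.lang :=
  fun m n => ⟨u, p, h, m, List.ext_getElem (by simp) (by simp)⟩

lemma GIET.IsOrbit.not_single_excursion {G : GIET A F} {u : ℤ → A} {p : ℤ → ℝ}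
    (horb : G.IsOrbit u p) {e e' : A} (hee' : e ≠ e') {s c : ℝ} (hs : 0 < s)
    (hT : ∀ x ∈ Ioo (G.l e) (G.r e), G.T x = s * x + c) {m : ℤ} (hum : u m = e') :
    ¬ ∀ k ≠ m, u k = e := by
  intro hu
  have hmem : ∀ k ≠ m, p k ∈ Ioo (G.l e) (G.r e) := fun k hk => hu k hk ▸ horb.2 k
  have hstep : ∀ k ≠ m, p (k + 1) = s * p k + c := fun k hk => by
    rw [← horb.1 k, hT _ (hmem k hk)]
  rcases le_total 1 s with hs1 | hs1
  · have hforward (n : ℕ) : p (m + 1 + (n + 1 : ℕ)) = s * p (m + 1 + n) + c := by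
      rw [← hstep _ (by omega)]
      push_cast
      ring_nf
    have hfix : s * p (m + 1) + c = p (m + 1) := by
      have h := affine_orbit_isFixed_of_bounded (y := fun n : ℕ => p (m + 1 + n)) hs1 hforward
        (fun n => Ioo_subset_Icc_self (hmem _ (by omega)))
      simpa using h
    have hin : p (m + 1) ∈ Ioo (G.l' e) (G.r' e) := by
      rw [← G.img e]
      exact ⟨_, hmem (m + 1) (by omega), by rw [hT _ (hmem (m + 1) (by omega)), hfix]⟩
    have hin' : p (m + 1) ∈ Ioo (G.l' e') (G.r' e') := by
      rw [← G.img e']; exact ⟨p m, hum ▸ horb.2 m, horb.1 m⟩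
    exact disjoint_left.mp (G.disj' e e' hee') hin hin'
  · -- the backward orbit is a forward orbit of the inverse map `x ↦ s⁻¹ * x - c / s`
    have hback (n : ℕ) : p (m - 1 - (n + 1 : ℕ)) = s⁻¹ * p (m - 1 - n) + -c / s := by
      have h := hstep (m - 1 - (n + 1 : ℕ)) (by omega)
      rw [show m - 1 - ((n + 1 : ℕ) : ℤ) + 1 = m - 1 - n by push_cast; ring] at h
      field_simp
      linarith
    have hfix : s⁻¹ * p (m - 1) + -c / s = p (m - 1) := by
      have h := affine_orbit_isFixed_of_bounded (y := fun n : ℕ => p (m - 1 - n))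
        ((one_le_inv₀ hs).mpr hs1) hback (fun n => Ioo_subset_Icc_self (hmem _ (by omega)))
      simpa using h
    have hpm : p m = p (m - 1) := by
      have h := hstep (m - 1) (by omega)
      rw [sub_add_cancel] at h
      field_simp at hfix
      linarith
    exact disjoint_left.mp (G.disj e e' hee') (hmem (m - 1) (by omega)) (hpm ▸ hum ▸ horb.2 m)

lemma exists_cons_append_mem_of_mem_XL {L : Set (List A)} {u : ℤ → A} (hu : u ∈ XL L)
    {k j : ℤ} (hkj : k < j) : ∃ w, u k :: (w ++ [u j]) ∈ L := by
  obtain ⟨n, rfl⟩ : ∃ n : ℕ, j = k + (n + 1 : ℕ) := ⟨(j - k - 1).toNat, by omega⟩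
  refine ⟨List.ofFn fun i : Fin n => u (k + (i + 1 : ℕ)), ?_⟩
  have h := hu k (n + 2)
  rw [List.ofFn_succ, List.ofFn_succ', List.concat_eq_append] at h
  simpa using h

lemma count_one_le_one_of_mem_skewSturmian {w : List (Fin 2)} (hw : w ∈ skewSturmian) :
    w.count 1 ≤ 1 := by
  rcases hw with ⟨n, rfl⟩ | ⟨n, m, rfl⟩ <;>
    simp [List.count_replicate, List.count_append]

lemma one_cons_append_one_notMem_skewSturmian (w : List (Fin 2)) :
    (1 : Fin 2) :: (w ++ [1]) ∉ skewSturmian := fun h => by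
  simpa [List.count_cons, List.count_append] using count_one_le_one_of_mem_skewSturmian h

lemma eq_zero_of_mem_XL_skewSturmian {u : ℤ → Fin 2} (hu : u ∈ XL skewSturmian) {m : ℤ}
    (hum : u m = 1) {k : ℤ} (hk : k ≠ m) : u k = 0 := by
  by_contra huk
  replace huk : u k = 1 := by omega
  obtain ⟨w, hw⟩ : ∃ w, (1 : Fin 2) :: (w ++ [1]) ∈ skewSturmian := by
    rcases lt_or_gt_of_ne hk with h | h <;>
      simpa [huk, hum] using exists_cons_append_mem_of_mem_XL hu h
  exact one_cons_append_one_notMem_skewSturmian w hw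

lemma skewSturmian_flippedOC : FlippedOC skewSturmian (∅ : Finset (Fin 2))
    (fun a b => a = 1 ∧ b = 0) (fun a b => a = 0 ∧ b = 1) := by
  intro w _ a b c d hab hcd hac hbd
  simp only [Finset.notMem_empty, decide_false, List.countP_false]
  have := one_cons_append_one_notMem_skewSturmian w
  fin_cases a <;> fin_cases b <;> fin_cases c <;> fin_cases d <;> simp_all

/-- the skew Sturmian language satisfies the unflipped order
condition with `1 <_D 2` and `2 <_A 1`, but it is not the natural coding of any
(unflipped) affine interval exchange transformation on two intervals. -/
theorem stmt19 :
    FlippedOC skewSturmian (∅ : Finset (Fin 2))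
      (fun a b => a = 1 ∧ b = 0)   -- 2 <_A 1
      (fun a b => a = 0 ∧ b = 1)   -- 1 <_D 2
    ∧
    ¬ ∃ G : GIET (Fin 2) (∅ : Finset (Fin 2)),
        (∀ e, ∃ s c : ℝ, 0 < s ∧
          ∀ x ∈ Set.Ioo (G.l e) (G.r e), G.T x = s * x + c) ∧
        G.lang = skewSturmian := by
  refine ⟨skewSturmian_flippedOC, ?_⟩
  rintro ⟨G, haff, hlang⟩
  obtain ⟨s, c, hs, hT⟩ := haff 0
  obtain ⟨u, p, horb, m, hm⟩ : [(1 : Fin 2)] ∈ G.lang := hlang ▸ Or.inr ⟨0, 0, rfl⟩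
  have hum : u m = 1 := by simpa [List.ofFn_succ] using hm
  have hXL : u ∈ XL skewSturmian := hlang ▸ horb.mem_XL_lang
  exact horb.not_single_excursion (by decide) hs hT hum
    fun k hk => eq_zero_of_mem_XL_skewSturmian hXL hum hk
end
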